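/- arXiv:2405.01252 — 11 statements merged into one kernel-verified Lean document; each statement's English description precedes it below -/
import Mathlib

section
/- Let d be a positive integer and let σ : ℝ^d → ℝ be σ(x) = x₁ + x₂ + ⋯ + x_d. Suppose v : [0,∞) × ℝ → ℝ is such that all partial derivatives ∂_t v, ∂_x v, ∂_x² v, ∂_x³ v and the mixed derivatives ∂_t∂_x v, ∂_t∂_x² v exist, are continuous, and mixed partials commute, and set n := v − d·∂_x²v. Assume the one-dimensional equation ∂_t n + d·v·∂_x n + 2d·(∂_x v)·n = 0 holds at every point of [0,∞) × ℝ. Define u, m : [0,∞) × ℝ^d → ℝ^d componentwise by u_i(t,x) = v(t, σ(x)) and m_i(t,x) = n(t, σ(x)) for each i = 1,…,d. Then: (i) m_i = u_i − Δu_i on [0,∞) × ℝ^d for each i (where Δ is the Laplacian in the x-variables); and (ii) for each i = 1,…,d, the Euler–Poincaré equation ∂_t m_i + Σ_{j=1}^d u_j ∂_{x_j} m_i + Σ_{j=1}^d (∂_{x_i} u_j) m_j + m_i Σ_{j=1}^d ∂_{x_j} u_j = 0 holds at every point of [0,∞) × ℝ^d. -/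
/-- Partial derivative of `f : (Fin d → ℝ) → ℝ` in the `j`-th coordinate direction. -/
noncomputable def pderivCoord {d : ℕ} (j : Fin d) (f : (Fin d → ℝ) → ℝ)
    (x : Fin d → ℝ) : ℝ :=
  deriv (fun s => f (Function.update x j s)) (x j)

lemma pderiv_sum {d : ℕ} (j : Fin d) (g : ℝ → ℝ) (x : Fin d → ℝ)
    (hg : DifferentiableAt ℝ g (∑ k, x k)) :
    pderivCoord j (fun z => g (∑ k, z k)) x = deriv g (∑ k, x k) := by
  unfold pderivCoord
  have key : (fun s => g (∑ k, Function.update x j s k))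
      = fun s => g (s + ∑ k ∈ Finset.univ.erase j, x k) := by
    funext s
    rw [Finset.sum_update_of_mem (Finset.mem_univ j), Finset.erase_eq]
  have hsum : x j + ∑ k ∈ Finset.univ.erase j, x k = ∑ k, x k :=
    Finset.add_sum_erase _ _ (Finset.mem_univ j)
  rw [key, deriv_comp_add_const, hsum]

/-- **Reduction of the Euler–Poincaré system.** If `v` solves the one-dimensional
Camassa–Holm type equation `∂ₜn + d v ∂ₓn + 2d (∂ₓv) n = 0` with `n = v - d ∂ₓ²v` on
`[0,∞) × ℝ`, then the ansatz `uᵢ(t,x) = v(t, x₁+⋯+x_d)`, `mᵢ(t,x) = n(t, x₁+⋯+x_d)`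
satisfies `m = (1-Δ)u` and the `d`-dimensional Euler–Poincaré equations. -/
theorem euler_poincare_reduction (d : ℕ) (hd : 0 < d) (v : ℝ → ℝ → ℝ)
    -- existence of the partial derivatives ∂ₜv, ∂ₓv, ∂ₓ²v, ∂ₓ³v, ∂ₜ∂ₓv, ∂ₜ∂ₓ²v
    (hvt : ∀ t x : ℝ, DifferentiableAt ℝ (fun s => v s x) t)
    (hvx : ∀ t x : ℝ, DifferentiableAt ℝ (v t) x)
    (hvxx : ∀ t x : ℝ, DifferentiableAt ℝ (deriv (v t)) x)
    (hvxxx : ∀ t x : ℝ, DifferentiableAt ℝ (deriv (deriv (v t))) x)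
    (hvtx : ∀ t x : ℝ, DifferentiableAt ℝ (fun s => deriv (v s) x) t)
    (hvtxx : ∀ t x : ℝ, DifferentiableAt ℝ (fun s => deriv (deriv (v s)) x) t)
    -- continuity of all these partial derivatives
    (hct : Continuous fun p : ℝ × ℝ => deriv (fun s => v s p.2) p.1)
    (hcx : Continuous fun p : ℝ × ℝ => deriv (v p.1) p.2)
    (hcxx : Continuous fun p : ℝ × ℝ => deriv (deriv (v p.1)) p.2)
    (hcxxx : Continuous fun p : ℝ × ℝ => deriv (deriv (deriv (v p.1))) p.2)
    (hctx : Continuous fun p : ℝ × ℝ => deriv (fun s => deriv (v s) p.2) p.1)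
    (hctxx : Continuous fun p : ℝ × ℝ => deriv (fun s => deriv (deriv (v s)) p.2) p.1)
    -- mixed partial derivatives commute
    (hcomm1 : ∀ t x : ℝ, deriv (fun s => deriv (v s) x) t
      = deriv (fun y => deriv (fun s => v s y) t) x)
    (hcomm2 : ∀ t x : ℝ, deriv (fun s => deriv (deriv (v s)) x) t
      = deriv (fun y => deriv (fun s => deriv (v s) y) t) x)
    -- the momentum n = v - d ∂ₓ²v
    (n : ℝ → ℝ → ℝ)
    (hn : ∀ t x : ℝ, n t x = v t x - d * deriv (deriv (v t)) x)
    -- the one-dimensional equation ∂ₜn + d v ∂ₓ n + 2 d (∂ₓ v) n = 0 on [0,∞) × ℝ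
    (heq : ∀ t : ℝ, 0 ≤ t → ∀ x : ℝ,
      deriv (fun s => n s x) t + d * v t x * deriv (n t) x
        + 2 * d * deriv (v t) x * n t x = 0)
    -- the ansatz
    (u m : ℝ → (Fin d → ℝ) → Fin d → ℝ)
    (hu : ∀ (t : ℝ) (x : Fin d → ℝ) (i : Fin d), u t x i = v t (∑ j, x j))
    (hm : ∀ (t : ℝ) (x : Fin d → ℝ) (i : Fin d), m t x i = n t (∑ j, x j)) :
    -- (i) m = (1 - Δ) u componentwise
    (∀ t : ℝ, 0 ≤ t → ∀ (x : Fin d → ℝ) (i : Fin d),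
      m t x i = u t x i
        - ∑ j, pderivCoord j (fun y => pderivCoord j (fun z => u t z i) y) x)
    ∧
    -- (ii) the Euler–Poincaré equations componentwise
    (∀ t : ℝ, 0 ≤ t → ∀ (x : Fin d → ℝ) (i : Fin d),
      deriv (fun s => m s x i) t
        + ∑ j, u t x j * pderivCoord j (fun y => m t y i) x
        + ∑ j, pderivCoord i (fun y => u t y j) x * m t x j
        + m t x i * ∑ j, pderivCoord j (fun y => u t y j) x = 0) := by
  constructor
  · intro t ht x i
    have hus : (fun z => u t z i) = fun z => v t (∑ k, z k) := funext fun z => hu t z i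
    have inner : ∀ (j : Fin d) (y : Fin d → ℝ),
        pderivCoord j (fun z => u t z i) y = deriv (v t) (∑ k, y k) := by
      intro j y; rw [hus]; exact pderiv_sum j (v t) y (hvx t _)
    have outer : ∀ j : Fin d,
        pderivCoord j (fun y => pderivCoord j (fun z => u t z i) y) x
          = deriv (deriv (v t)) (∑ k, x k) := by
      intro j
      have : (fun y => pderivCoord j (fun z => u t z i) y)
          = fun y => deriv (v t) (∑ k, y k) := funext (inner j)
      rw [this]; exact pderiv_sum j (deriv (v t)) x (hvxx t _)
    rw [hm, hu, hn]
    simp only [outer, Finset.sum_const, Finset.card_univ, Fintype.card_fin, nsmul_eq_mul]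
  · intro t ht x i
    set S := ∑ k, x k with hS
    have hnfun : n t = fun y => v t y - d * deriv (deriv (v t)) y := funext (hn t)
    have hnd : ∀ y : ℝ, DifferentiableAt ℝ (n t) y := by
      intro y; rw [hnfun]
      exact (hvx t y).sub ((hvxxx t y).const_mul d)
    have hT1 : (fun s => m s x i) = fun s => n s S := funext fun s => hm s x i
    have hus : ∀ i' : Fin d, (fun z => u t z i') = fun z => v t (∑ k, z k) :=
      fun i' => funext fun z => hu t z i'
    have hms : (fun y => m t y i) = fun y => n t (∑ k, y k) :=
      funext fun y => hm t y i
    have hT2 : ∀ j : Fin d, pderivCoord j (fun y => n t (∑ k, y k)) x = deriv (n t) S :=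
      fun j => pderiv_sum j (n t) x (hnd _)
    have hT3 : ∀ j : Fin d, pderivCoord j (fun y => v t (∑ k, y k)) x = deriv (v t) S :=
      fun j => pderiv_sum j (v t) x (hvx t _)
    simp only [hT1, hm, hu, hT2, hT3, Finset.sum_const, Finset.card_univ,
      Fintype.card_fin, nsmul_eq_mul]
    linear_combination heq t ht S
end

section
/- Let d > 0 be a real number and let f : ℝ → ℝ be continuous and integrable. Then the function u := p_d ∗ f is twice continuously differentiable on ℝ and satisfies u(x) − d·u''(x) = f(x) for every x ∈ ℝ. -/
/-!
With `k = 1/√d`, splitting the convolution at `x` gives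
`u(x) = (k/2) (e^{-kx} A(x) + e^{kx} B(x))`, where `A(x) = ∫_{ξ ≤ x} e^{kξ} f(ξ)` and
`B(x) = ∫_{ξ > x} e^{-kξ} f(ξ)` have derivatives `e^{kx} f(x)` and `-e^{-kx} f(x)`.
Differentiating as in variation of constants, the `f`-terms cancel in `u'` and add up in `u''`,
which gives `u'' = k² (u - f)`, i.e. `u - d u'' = f`.
-/

/-- The kernel `p_d(x) = (1/(2√d)) exp(-|x|/√d)`. -/
noncomputable def pd (d : ℝ) (x : ℝ) : ℝ :=
  1 / (2 * Real.sqrt d) * Real.exp (-|x| / Real.sqrt d)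

open MeasureTheory Set Real

section Primitive

variable {g : ℝ → ℝ}

theorem hasDerivAt_integral_Iic (hg : Continuous g) (hint : ∀ x, IntegrableOn g (Iic x))
    (x : ℝ) : HasDerivAt (fun y => ∫ t in Iic y, g t) (g x) x := by
  have hprim : (fun y => ∫ t in Iic y, g t) = fun y => (∫ t in Iic 0, g t) + ∫ t in 0..y, g t := by
    funext y
    rw [← intervalIntegral.integral_Iic_sub_Iic (hint 0) (hint y)]
    ring
  rw [hprim]
  exact (hg.integral_hasStrictDerivAt 0 x).hasDerivAt.const_add _

theorem hasDerivAt_integral_Ioi (hg : Continuous g) (hint : ∀ x, IntegrableOn g (Ioi x))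
    (x : ℝ) : HasDerivAt (fun y => ∫ t in Ioi y, g t) (-g x) x := by
  have hprim : (fun y => ∫ t in Ioi y, g t) = fun y => (∫ t in Ioi 0, g t) - ∫ t in 0..y, g t := by
    funext y
    rw [← intervalIntegral.integral_Ioi_sub_Ioi' (hint 0) (hint y)]
    ring
  rw [hprim]
  exact (hg.integral_hasStrictDerivAt 0 x).hasDerivAt.const_sub _

end Primitive

section ExpWeight

variable {f : ℝ → ℝ} {a : ℝ}

theorem integrableOn_Iic_exp_mul (ha : 0 ≤ a) (hf : Integrable f) (x : ℝ) :
    IntegrableOn (fun ξ => exp (a * ξ) * f ξ) (Iic x) := by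
  refine hf.integrableOn.bdd_mul (c := exp (a * x)) (by fun_prop) ?_
  filter_upwards [ae_restrict_mem measurableSet_Iic] with ξ hξ
  rw [norm_of_nonneg (exp_pos _).le]
  exact exp_le_exp.2 (mul_le_mul_of_nonneg_left hξ ha)

theorem integrableOn_Ioi_exp_mul (ha : a ≤ 0) (hf : Integrable f) (x : ℝ) :
    IntegrableOn (fun ξ => exp (a * ξ) * f ξ) (Ioi x) := by
  refine hf.integrableOn.bdd_mul (c := exp (a * x)) (by fun_prop) ?_
  filter_upwards [ae_restrict_mem measurableSet_Ioi] with ξ hξ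
  rw [norm_of_nonneg (exp_pos _).le]
  exact exp_le_exp.2 (mul_le_mul_of_nonpos_left (le_of_lt hξ) ha)

end ExpWeight

section VariationOfConstants

variable {k : ℝ} {f A B : ℝ → ℝ} {x : ℝ}

theorem hasDerivAt_exp_mul_add_exp_mul (hA : HasDerivAt A (exp (k * x) * f x) x)
    (hB : HasDerivAt B (-(exp (-k * x) * f x)) x) :
    HasDerivAt (fun y => exp (-k * y) * A y + exp (k * y) * B y)
      (k * (-(exp (-k * x) * A x) + exp (k * x) * B x)) x := by
  have hneg := ((hasDerivAt_id x).const_mul (-k)).exp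
  have hpos := ((hasDerivAt_id x).const_mul k).exp
  refine ((hneg.mul hA).add (hpos.mul hB)).congr_deriv ?_
  simp only [id]
  ring

theorem hasDerivAt_neg_exp_mul_add_exp_mul (hA : HasDerivAt A (exp (k * x) * f x) x)
    (hB : HasDerivAt B (-(exp (-k * x) * f x)) x) :
    HasDerivAt (fun y => -(exp (-k * y) * A y) + exp (k * y) * B y)
      (k * (exp (-k * x) * A x + exp (k * x) * B x) - 2 * f x) x := by
  have hneg := ((hasDerivAt_id x).const_mul (-k)).exp
  have hpos := ((hasDerivAt_id x).const_mul k).exp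
  have hcancel : exp (-k * x) * exp (k * x) = 1 := by
    rw [← exp_add, neg_mul, neg_add_cancel, exp_zero]
  refine ((hneg.mul hA).neg.add (hpos.mul hB)).congr_deriv ?_
  simp only [id]
  linear_combination (-2 * f x) * hcancel

end VariationOfConstants

theorem contDiff_two_of_hasDerivAt {u v w : ℝ → ℝ} (hu : ∀ x, HasDerivAt u (v x) x)
    (hv : ∀ x, HasDerivAt v (w x) x) (hw : Continuous w) : ContDiff ℝ 2 u := by
  have hderiv_u : deriv u = v := funext fun x => (hu x).deriv
  have hderiv_v : deriv v = w := funext fun x => (hv x).deriv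
  rw [show (2 : WithTop ℕ∞) = 1 + 1 from rfl, contDiff_succ_iff_deriv, hderiv_u,
    contDiff_one_iff_deriv, hderiv_v]
  exact ⟨fun x => (hu x).differentiableAt, by simp, fun x => (hv x).differentiableAt, hw⟩

section Kernel

variable {d x ξ : ℝ}

theorem pd_sub_of_le (h : ξ ≤ x) :
    pd d (x - ξ) = (√d)⁻¹ / 2 * (exp (-(√d)⁻¹ * x) * exp ((√d)⁻¹ * ξ)) := by
  rw [pd, abs_of_nonneg (sub_nonneg.2 h), ← exp_add]
  ring_nf

theorem pd_sub_of_lt (h : x < ξ) :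
    pd d (x - ξ) = (√d)⁻¹ / 2 * (exp ((√d)⁻¹ * x) * exp (-(√d)⁻¹ * ξ)) := by
  rw [pd, abs_of_neg (sub_neg.2 h), ← exp_add]
  ring_nf

theorem integral_pd_sub_mul_eq {f : ℝ → ℝ} (hd : 0 < d) (hf : Integrable f) (x : ℝ) :
    ∫ ξ, pd d (x - ξ) * f ξ = (√d)⁻¹ / 2 *
      (exp (-(√d)⁻¹ * x) * (∫ ξ in Iic x, exp ((√d)⁻¹ * ξ) * f ξ)
        + exp ((√d)⁻¹ * x) * ∫ ξ in Ioi x, exp (-(√d)⁻¹ * ξ) * f ξ) := by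
  have hk : 0 ≤ (√d)⁻¹ := by positivity
  have hleft : EqOn (fun ξ => pd d (x - ξ) * f ξ)
      (fun ξ => (√d)⁻¹ / 2 * exp (-(√d)⁻¹ * x) * (exp ((√d)⁻¹ * ξ) * f ξ)) (Iic x) := by
    intro ξ hξ
    simp only [pd_sub_of_le (mem_Iic.1 hξ)]
    ring
  have hright : EqOn (fun ξ => pd d (x - ξ) * f ξ)
      (fun ξ => (√d)⁻¹ / 2 * exp ((√d)⁻¹ * x) * (exp (-(√d)⁻¹ * ξ) * f ξ)) (Ioi x) := by
    intro ξ hξ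
    simp only [pd_sub_of_lt (mem_Ioi.1 hξ)]
    ring
  rw [← intervalIntegral.integral_Iic_add_Ioi
      (IntegrableOn.congr_fun ((integrableOn_Iic_exp_mul hk hf x).const_mul _) hleft.symm
        measurableSet_Iic)
      (IntegrableOn.congr_fun ((integrableOn_Ioi_exp_mul (neg_nonpos.2 hk) hf x).const_mul _)
        hright.symm measurableSet_Ioi),
    setIntegral_congr_fun measurableSet_Iic hleft, setIntegral_congr_fun measurableSet_Ioi hright,
    integral_const_mul, integral_const_mul]
  ring

end Kernel

/-- **`p_d` is the Green function of `1 - d∂ₓ²` on the line.** If `f` is continuous and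
integrable, then `u := p_d ∗ f` is twice continuously differentiable and
`u - d u'' = f`. -/
theorem green_function_pd (d : ℝ) (hd : 0 < d) (f : ℝ → ℝ)
    (hf : Continuous f) (hfi : MeasureTheory.Integrable f) :
    ContDiff ℝ 2 (fun x => ∫ ξ : ℝ, pd d (x - ξ) * f ξ) ∧
    ∀ x : ℝ, (∫ ξ : ℝ, pd d (x - ξ) * f ξ)
      - d * deriv (deriv (fun y => ∫ ξ : ℝ, pd d (y - ξ) * f ξ)) x = f x := by
  set k := (√d)⁻¹ with hk_def
  have hk : 0 ≤ k := by positivity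
  set A := fun x => ∫ ξ in Iic x, exp (k * ξ) * f ξ
  set B := fun x => ∫ ξ in Ioi x, exp (-k * ξ) * f ξ
  have hA : ∀ x, HasDerivAt A (exp (k * x) * f x) x :=
    hasDerivAt_integral_Iic (by fun_prop) (integrableOn_Iic_exp_mul hk hfi)
  have hB : ∀ x, HasDerivAt B (-(exp (-k * x) * f x)) x :=
    hasDerivAt_integral_Ioi (by fun_prop) (integrableOn_Ioi_exp_mul (neg_nonpos.2 hk) hfi)
  set u := fun x => ∫ ξ, pd d (x - ξ) * f ξ
  set v := fun x => k / 2 * (k * (-(exp (-k * x) * A x) + exp (k * x) * B x))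
  have hu_eq : u = fun x => k / 2 * (exp (-k * x) * A x + exp (k * x) * B x) :=
    funext fun x => integral_pd_sub_mul_eq hd hfi x
  have hu : ∀ x, HasDerivAt u (v x) x := fun x => by
    rw [hu_eq]
    exact (hasDerivAt_exp_mul_add_exp_mul (hA x) (hB x)).const_mul _
  have hv : ∀ x, HasDerivAt v (k ^ 2 * (u x - f x)) x := fun x => by
    refine (((hasDerivAt_neg_exp_mul_add_exp_mul (hA x) (hB x)).const_mul k).const_mul
      (k / 2)).congr_deriv ?_
    rw [hu_eq]
    ring
  have hdk : d * k ^ 2 = 1 := by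
    rw [hk_def, inv_pow, sq_sqrt hd.le, mul_inv_cancel₀ hd.ne']
  have hu_cont : Continuous u := continuous_iff_continuousAt.2 fun x => (hu x).continuousAt
  refine ⟨contDiff_two_of_hasDerivAt hu hv (by fun_prop), fun x => ?_⟩
  rw [show deriv u = v from funext fun y => (hu y).deriv, (hv x).deriv]
  linear_combination (f x - u x) * hdk
end

section
/- Let d > 0 be a real number and let n : ℝ → ℝ be continuous, integrable, and nonnegative (n(ξ) ≥ 0 for all ξ). Set v := p_d ∗ n. Then v is differentiable on ℝ, with v'(x) = −(1/(2d)) ∫_ℝ sgn(x − ξ)·exp(−|x − ξ|/√d)·n(ξ) dξ, and moreover |v'(x)| ≤ (1/√d)·v(x) for every x ∈ ℝ. -/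
/-!
The kernel `p_d` is `1/(2d)`-Lipschitz and differentiable away from the origin, so `v = p_d ∗ n`
can be differentiated under the integral sign, with domination by `|n|/(2d)`. The derivative of
the kernel satisfies `|p_d'| ≤ p_d/√d` pointwise, and integrating this against `n ≥ 0` gives
`|v'| ≤ v/√d`.
-/

open MeasureTheory Real

@[fun_prop]
theorem Real.measurable_sign : Measurable Real.sign :=
  Measurable.ite measurableSet_Iio measurable_const
    (Measurable.ite measurableSet_Ioi measurable_const measurable_const)

theorem Real.abs_sign_le_one (x : ℝ) : |Real.sign x| ≤ 1 := by
  rcases Real.sign_apply_eq x with h | h | h <;> simp [h]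

theorem Real.sign_eq_coe_sign (x : ℝ) : Real.sign x = SignType.sign x := by
  rcases lt_trichotomy x 0 with h | h | h
  · simp [h, Real.sign_of_neg]
  · simp [h]
  · simp [h, Real.sign_of_pos]

theorem Real.abs_exp_neg_sub_exp_neg_le {u v : ℝ} (hu : 0 ≤ u) (hv : 0 ≤ v) :
    |exp (-u) - exp (-v)| ≤ |u - v| := by
  have hderiv_le : ∀ t ∈ Set.Ici (0 : ℝ), ‖exp (-t) * -1‖ ≤ 1 := fun t ht => by
    simpa using exp_le_one_iff.2 (neg_nonpos.2 (Set.mem_Ici.1 ht))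
  simpa using (convex_Ici 0).norm_image_sub_le_of_norm_hasDerivWithin_le
    (fun t _ => (hasDerivAt_neg t).exp.hasDerivWithinAt) hderiv_le hv hu

theorem one_div_two_mul_sqrt_mul_one_div_sqrt {d : ℝ} (hd : 0 ≤ d) :
    1 / (2 * √d) * (1 / √d) = 1 / (2 * d) := by
  rw [div_mul_div_comm, mul_assoc, mul_self_sqrt hd, one_mul]

noncomputable def pdDeriv (d x : ℝ) : ℝ :=
  -(1 / (2 * d)) * (Real.sign x * exp (-|x| / √d))

section Kernel

variable {d : ℝ}

theorem pd_nonneg (d x : ℝ) : 0 ≤ pd d x := by unfold pd; positivity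

theorem pd_le (d x : ℝ) : pd d x ≤ 1 / (2 * √d) := by
  unfold pd
  refine mul_le_of_le_one_right (by positivity) (exp_le_one_iff.2 ?_)
  exact div_nonpos_of_nonpos_of_nonneg (neg_nonpos.2 (abs_nonneg x)) (sqrt_nonneg d)

theorem continuous_pd (d : ℝ) : Continuous (pd d) := by unfold pd; fun_prop

theorem abs_pd_sub_pd_le (hd : 0 ≤ d) (a b : ℝ) : |pd d a - pd d b| ≤ 1 / (2 * d) * |a - b| := by
  have hexp := abs_exp_neg_sub_exp_neg_le (div_nonneg (abs_nonneg a) (sqrt_nonneg d))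
    (div_nonneg (abs_nonneg b) (sqrt_nonneg d))
  have habs : |(|a| / √d - |b| / √d)| ≤ |a - b| / √d := by
    rw [← sub_div, abs_div, abs_of_nonneg (sqrt_nonneg d)]
    exact div_le_div_of_nonneg_right (abs_abs_sub_abs_le_abs_sub a b) (sqrt_nonneg d)
  calc |pd d a - pd d b| = 1 / (2 * √d) * |exp (-(|a| / √d)) - exp (-(|b| / √d))| := by
        rw [pd, pd, ← mul_sub, abs_mul, abs_of_nonneg (by positivity), neg_div, neg_div]
    _ ≤ 1 / (2 * √d) * (|a - b| / √d) := by gcongr; exact hexp.trans habs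
    _ = 1 / (2 * d) * |a - b| := by rw [← one_div_two_mul_sqrt_mul_one_div_sqrt hd]; ring

theorem hasDerivAt_pd {x : ℝ} (hd : 0 ≤ d) (hx : x ≠ 0) : HasDerivAt (pd d) (pdDeriv d x) x := by
  have hexponent : HasDerivAt (fun y => -|y| / √d) (-(SignType.sign x : ℝ) / √d) x :=
    (hasDerivAt_abs hx).neg.div_const _
  refine (hexponent.exp.const_mul (1 / (2 * √d))).congr_deriv ?_
  rw [pdDeriv, Real.sign_eq_coe_sign, ← one_div_two_mul_sqrt_mul_one_div_sqrt hd]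
  ring

theorem abs_pdDeriv_le (hd : 0 ≤ d) (x : ℝ) : |pdDeriv d x| ≤ 1 / √d * pd d x := by
  calc |pdDeriv d x| = 1 / (2 * d) * (|Real.sign x| * exp (-|x| / √d)) := by
        rw [pdDeriv, abs_mul, abs_neg, abs_of_nonneg (by positivity), abs_mul,
          abs_of_pos (exp_pos _)]
    _ ≤ 1 / (2 * d) * (1 * exp (-|x| / √d)) := by gcongr; exact Real.abs_sign_le_one x
    _ = 1 / √d * pd d x := by rw [pd, ← one_div_two_mul_sqrt_mul_one_div_sqrt hd]; ring

end Kernel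

section Convolution

variable {d : ℝ} {n : ℝ → ℝ}

theorem integrable_pd_sub_mul (hn : Integrable n) (x : ℝ) :
    Integrable (fun ξ => pd d (x - ξ) * n ξ) :=
  hn.bdd_mul ((continuous_pd d).comp (continuous_const.sub continuous_id)).aestronglyMeasurable
    (ae_of_all _ fun _ => (norm_of_nonneg (pd_nonneg d _)).trans_le (pd_le d _))

theorem hasDerivAt_integral_pd_sub_mul (hd : 0 ≤ d) (hn : Integrable n) (x₀ : ℝ) :
    HasDerivAt (fun x => ∫ ξ, pd d (x - ξ) * n ξ) (∫ ξ, pdDeriv d (x₀ - ξ) * n ξ) x₀ := by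
  have hlip : ∀ ξ, LipschitzOnWith (Real.nnabs (1 / (2 * d) * |n ξ|))
      (fun x => pd d (x - ξ) * n ξ) Set.univ := fun ξ => by
    refine lipschitzOnWith_iff_dist_le_mul.2 fun x _ y _ => ?_
    rw [Real.coe_nnabs, abs_of_nonneg (by positivity), dist_eq, dist_eq, ← sub_mul, abs_mul]
    calc |pd d (x - ξ) - pd d (y - ξ)| * |n ξ| ≤ 1 / (2 * d) * |x - ξ - (y - ξ)| * |n ξ| := by
          gcongr; exact abs_pd_sub_pd_le hd _ _
      _ = 1 / (2 * d) * |n ξ| * |x - y| := by rw [sub_sub_sub_cancel_right]; ring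
  have hderiv : ∀ᵐ ξ, HasDerivAt (fun x => pd d (x - ξ) * n ξ) (pdDeriv d (x₀ - ξ) * n ξ) x₀ := by
    filter_upwards [Measure.ae_ne volume x₀] with ξ hξ
    exact ((hasDerivAt_pd hd (sub_ne_zero.2 hξ.symm)).comp_sub_const x₀ ξ).mul_const (n ξ)
  have hmeas : AEStronglyMeasurable (fun ξ => pdDeriv d (x₀ - ξ) * n ξ) := by
    refine Measurable.aestronglyMeasurable ?_ |>.mul hn.aestronglyMeasurable
    unfold pdDeriv
    fun_prop
  exact (hasDerivAt_integral_of_dominated_loc_of_lip Filter.univ_mem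
    (.of_forall fun x => (integrable_pd_sub_mul hn x).aestronglyMeasurable)
    (integrable_pd_sub_mul hn x₀) hmeas (ae_of_all _ hlip) (hn.abs.const_mul _) hderiv).2

theorem abs_integral_pdDeriv_sub_mul_le (hd : 0 ≤ d) (hn : Integrable n) (hpos : ∀ ξ, 0 ≤ n ξ)
    (x : ℝ) : |∫ ξ, pdDeriv d (x - ξ) * n ξ| ≤ 1 / √d * ∫ ξ, pd d (x - ξ) * n ξ := by
  rw [← integral_const_mul, ← norm_eq_abs]
  refine norm_integral_le_of_norm_le ((integrable_pd_sub_mul hn x).const_mul _)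
    (ae_of_all _ fun ξ => ?_)
  rw [norm_mul, norm_of_nonneg (hpos ξ), ← mul_assoc]
  exact mul_le_mul_of_nonneg_right (abs_pdDeriv_le hd _) (hpos ξ)

end Convolution

theorem deriv_convolution_nonneg_bound_general (d : ℝ) (hd : 0 < d) (n : ℝ → ℝ)
    (hi : MeasureTheory.Integrable n) (hpos : ∀ ξ, 0 ≤ n ξ)
    (v : ℝ → ℝ) (hv : v = fun x => ∫ ξ : ℝ, pd d (x - ξ) * n ξ) :
    Differentiable ℝ v ∧
    (∀ x : ℝ, deriv v x
      = -(1 / (2 * d))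
          * ∫ ξ : ℝ, Real.sign (x - ξ) * Real.exp (-|x - ξ| / Real.sqrt d) * n ξ) ∧
    (∀ x : ℝ, |deriv v x| ≤ (1 / Real.sqrt d) * v x) := by
  subst hv
  have hderiv := hasDerivAt_integral_pd_sub_mul hd.le hi
  refine ⟨fun x => (hderiv x).differentiableAt, fun x => ?_, fun x => ?_⟩
  · rw [(hderiv x).deriv, ← integral_const_mul]
    simp only [pdDeriv, mul_assoc]
  · rw [(hderiv x).deriv]
    exact abs_integral_pdDeriv_sub_mul_le hd.le hi hpos x

/-- **Key estimate of the first global existence case.** If `n ≥ 0` is continuous and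
integrable and `v := p_d ∗ n`, then `v` is differentiable,
`v'(x) = -(1/(2d)) ∫ sgn(x-ξ) e^{-|x-ξ|/√d} n(ξ) dξ`, and `|v'(x)| ≤ (1/√d) v(x)`. -/
theorem deriv_convolution_nonneg_bound (d : ℝ) (hd : 0 < d) (n : ℝ → ℝ)
    (hc : Continuous n) (hi : MeasureTheory.Integrable n) (hpos : ∀ ξ, 0 ≤ n ξ)
    (v : ℝ → ℝ) (hv : v = fun x => ∫ ξ : ℝ, pd d (x - ξ) * n ξ) :
    Differentiable ℝ v ∧
    (∀ x : ℝ, deriv v x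
      = -(1 / (2 * d))
          * ∫ ξ : ℝ, Real.sign (x - ξ) * Real.exp (-|x - ξ| / Real.sqrt d) * n ξ) ∧
    (∀ x : ℝ, |deriv v x| ≤ (1 / Real.sqrt d) * v x) :=
  deriv_convolution_nonneg_bound_general d hd n hi hpos v hv
end

section
/- Let d > 0 be a real number and let v : ℝ → ℝ be continuously differentiable with v² and (v')² integrable on ℝ and v(ξ) → 0 as ξ → +∞. Then for every x ∈ ℝ: (1/√d)·e^{x/√d} ∫_x^{+∞} e^{−ξ/√d}·( v(ξ)²/d + v'(ξ)²/2 ) dξ ≥ v(x)²/(2d). -/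
open MeasureTheory Filter Set Real Topology

/-!
Put `s = √d` and `w(ξ) = e^{(x-ξ)/s}`. The function `w v²` has derivative `w (2 v v' - v²/s)`
and tends to `0` at `+∞`, so its derivative integrates over `(x, ∞)` to `-v(x)²`. The integrand
of `F`, times `2d`, dominates minus that derivative: the difference is `w (v + s v')² / s ≥ 0`.
-/

theorem integrable_mul_of_integrable_sq {α : Type*} [MeasurableSpace α] {μ : Measure α}
    {f g : α → ℝ} (hf : AEStronglyMeasurable f μ) (hg : AEStronglyMeasurable g μ)
    (hf2 : Integrable (fun a => f a ^ 2) μ) (hg2 : Integrable (fun a => g a ^ 2) μ) :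
    Integrable (fun a => f a * g a) μ :=
  ((memLp_two_iff_integrable_sq hf).2 hf2).integrable_mul ((memLp_two_iff_integrable_sq hg).2 hg2)

section ExpWeight

variable {s x : ℝ}

theorem integrableOn_Ioi_exp_sub_div_mul {μ : Measure ℝ} {f : ℝ → ℝ} (hs : 0 ≤ s)
    (hf : Integrable f μ) : IntegrableOn (fun ξ => exp ((x - ξ) / s) * f ξ) (Ioi x) μ := by
  refine hf.restrict.bdd_mul (c := 1) (by fun_prop) ?_
  filter_upwards [ae_restrict_mem measurableSet_Ioi] with ξ (hξ : x < ξ)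
  rw [norm_of_nonneg (exp_pos _).le, exp_le_one_iff]
  exact div_nonpos_of_nonpos_of_nonneg (by linarith) hs

theorem tendsto_exp_sub_div_atTop (hs : 0 < s) :
    Tendsto (fun ξ => exp ((x - ξ) / s)) atTop (𝓝 0) :=
  tendsto_exp_atBot.comp <|
    (tendsto_atBot_add_const_left atTop x tendsto_neg_atTop_atBot).atBot_div_const hs

theorem neg_mul_two_mul_sub_div_le {e a b : ℝ} (hs : 0 < s) (he : 0 ≤ e) :
    -(e * (2 * a * b - a ^ 2 / s)) ≤ e * (2 * a ^ 2 / s + s * b ^ 2) := by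
  have key : e * (2 * a ^ 2 / s + s * b ^ 2) - -(e * (2 * a * b - a ^ 2 / s))
      = e * (a + s * b) ^ 2 / s := by
    field_simp
    ring
  rw [← sub_nonneg, key]
  positivity

variable {v : ℝ → ℝ}

theorem hasDerivAt_exp_sub_div_mul_sq {v' : ℝ} {ξ : ℝ} (hv : HasDerivAt v v' ξ) :
    HasDerivAt (fun η => exp ((x - η) / s) * v η ^ 2)
      (exp ((x - ξ) / s) * (2 * v ξ * v' - v ξ ^ 2 / s)) ξ := by
  have hw : HasDerivAt (fun η => exp ((x - η) / s)) (exp ((x - ξ) / s) * (-1 / s)) ξ := by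
    simpa using (((hasDerivAt_id ξ).const_sub x).div_const s).exp
  exact (hw.fun_mul (hv.fun_pow 2)).congr_deriv (by simp only [Nat.cast_ofNat]; ring)

theorem sq_le_integral_Ioi_exp_sub_div_mul (hs : 0 < s) (hv : Differentiable ℝ v)
    (hv2 : Integrable fun ξ => v ξ ^ 2) (hv'2 : Integrable fun ξ => deriv v ξ ^ 2)
    (hlim : Tendsto v atTop (𝓝 0)) (x : ℝ) :
    v x ^ 2 ≤ ∫ ξ in Ioi x, exp ((x - ξ) / s) * (2 * v ξ ^ 2 / s + s * deriv v ξ ^ 2) := by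
  have hmeas : AEStronglyMeasurable v volume := hv.continuous.aestronglyMeasurable
  have hmeas' : AEStronglyMeasurable (deriv v) volume :=
    (measurable_deriv v).aestronglyMeasurable
  have hprod : Integrable fun ξ => v ξ * deriv v ξ :=
    integrable_mul_of_integrable_sq hmeas hmeas' hv2 hv'2
  have hint_deriv : IntegrableOn
      (fun ξ => exp ((x - ξ) / s) * (2 * v ξ * deriv v ξ - v ξ ^ 2 / s)) (Ioi x) :=
    integrableOn_Ioi_exp_sub_div_mul hs.le <| ((hprod.const_mul 2).sub (hv2.div_const s)).congr
      (.of_forall fun ξ => by simp only [Pi.sub_apply]; ring)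
  have hint_bound : IntegrableOn
      (fun ξ => exp ((x - ξ) / s) * (2 * v ξ ^ 2 / s + s * deriv v ξ ^ 2)) (Ioi x) :=
    integrableOn_Ioi_exp_sub_div_mul hs.le <| ((hv2.const_mul 2).div_const s).add
      (hv'2.const_mul s)
  have hFTC : ∫ ξ in Ioi x, exp ((x - ξ) / s) * (2 * v ξ * deriv v ξ - v ξ ^ 2 / s)
      = 0 - exp ((x - x) / s) * v x ^ 2 :=
    integral_Ioi_of_hasDerivAt_of_tendsto'
      (fun ξ _ => hasDerivAt_exp_sub_div_mul_sq (hv ξ).hasDerivAt) hint_deriv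
      (by simpa using (tendsto_exp_sub_div_atTop hs).mul (hlim.pow 2))
  calc v x ^ 2
      = ∫ ξ in Ioi x, -(exp ((x - ξ) / s) * (2 * v ξ * deriv v ξ - v ξ ^ 2 / s)) := by
        simp [integral_neg, hFTC]
    _ ≤ _ := integral_mono hint_deriv.neg hint_bound
        fun ξ => neg_mul_two_mul_sub_div_le hs (exp_pos _).le

end ExpWeight

/-- **The convolution estimate `F(w,V) ≥ w²/2` of the blow-up proof** (with `w = v/√d`,
`V = v'`): for `v` continuously differentiable with `v²`, `(v')²` integrable and
`v(ξ) → 0` as `ξ → +∞`,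
`(1/√d) e^{x/√d} ∫_x^∞ e^{-ξ/√d} (v²/d + v'²/2) dξ ≥ v(x)²/(2d)`. -/
theorem F_lower_bound (d : ℝ) (hd : 0 < d) (v : ℝ → ℝ) (hv : ContDiff ℝ 1 v)
    (h2 : MeasureTheory.Integrable (fun ξ => (v ξ) ^ 2))
    (h2' : MeasureTheory.Integrable (fun ξ => (deriv v ξ) ^ 2))
    (hlim : Filter.Tendsto v Filter.atTop (nhds 0)) (x : ℝ) :
    (1 / Real.sqrt d) * Real.exp (x / Real.sqrt d)
      * (∫ ξ in Set.Ioi x,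
          Real.exp (-ξ / Real.sqrt d) * ((v ξ) ^ 2 / d + (deriv v ξ) ^ 2 / 2))
      ≥ (v x) ^ 2 / (2 * d) := by
  set s := √d
  have hs : 0 < s := sqrt_pos.2 hd
  have hd_eq : d = s ^ 2 := (sq_sqrt hd.le).symm
  rw [ge_iff_le, ← integral_const_mul]
  calc v x ^ 2 / (2 * d)
      ≤ 1 / (2 * d) *
          ∫ ξ in Ioi x, exp ((x - ξ) / s) * (2 * v ξ ^ 2 / s + s * deriv v ξ ^ 2) := by
        rw [div_eq_inv_mul, one_div]
        gcongr
        exact sq_le_integral_Ioi_exp_sub_div_mul hs (hv.differentiable one_ne_zero) h2 h2' hlim x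
    _ = _ := by
        rw [← integral_const_mul]
        refine integral_congr_ae (ae_of_all _ fun ξ => ?_)
        simp only [hd_eq, sub_div, exp_sub, neg_div, exp_neg]
        field_simp
end

section
/- Let d > 0 be a real number and let v : ℝ → ℝ be continuously differentiable with v² and (v')² integrable on ℝ and v(ξ) → 0 as ξ → −∞. Then for every x ∈ ℝ: (1/√d)·e^{−x/√d} ∫_{−∞}^x e^{ξ/√d}·( v(ξ)²/d + v'(ξ)²/2 ) dξ ≥ v(x)²/(2d). -/
/-!
Write `s = √d` and `w = v / s`. Since `e^{ξ/s} (F + s F')` is the derivative of `s e^{ξ/s} F`,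
the operator `f ↦ (1/s) e^{-x/s} ∫_{-∞}^x e^{ξ/s} f(ξ) dξ` inverts `1 + s∂` on functions with
`e^{ξ/s} F → 0` at `-∞`, and it is monotone. Applied to `F = w²/2`, for which
`F + s F' = w²/2 + w v'`, the bound `w²/2 + w v' ≤ w² + v'²/2`, i.e. `(w - v')² ≥ 0`,
gives the claim.
-/

open MeasureTheory Set Filter Real Topology

theorem abs_sq_div_two_add_mul_le (a b : ℝ) : |a ^ 2 / 2 + a * b| ≤ a ^ 2 + b ^ 2 / 2 := by
  rw [abs_le]
  constructor <;> nlinarith [sq_nonneg (a + b), sq_nonneg (a - b), sq_nonneg a]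

theorem MeasureTheory.Integrable.integrableOn_exp_div_mul_Iio {f : ℝ → ℝ} (hf : Integrable f)
    {s : ℝ} (hs : 0 ≤ s) (x : ℝ) : IntegrableOn (fun ξ => exp (ξ / s) * f ξ) (Iio x) := by
  refine hf.integrableOn.bdd_mul (c := exp (x / s))
    (by fun_prop : Continuous fun ξ => exp (ξ / s)).aestronglyMeasurable ?_
  filter_upwards [ae_restrict_mem measurableSet_Iio] with ξ hξ
  rw [norm_of_nonneg (exp_pos _).le]
  exact exp_le_exp.mpr (div_le_div_of_nonneg_right hξ.le hs)

section Resolvent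

variable {s x : ℝ} {F f : ℝ → ℝ}

theorem hasDerivAt_mul_exp_div_mul (hs : s ≠ 0) {ξ : ℝ} (hF : DifferentiableAt ℝ F ξ) :
    HasDerivAt (fun ξ => s * (exp (ξ / s) * F ξ))
      (exp (ξ / s) * (F ξ + s * deriv F ξ)) ξ := by
  have hexp : HasDerivAt (fun ξ => exp (ξ / s)) (exp (ξ / s) * (1 / s)) ξ :=
    (hasDerivAt_exp _).comp ξ ((hasDerivAt_id ξ).div_const s)
  refine ((hexp.mul hF.hasDerivAt).const_mul s).congr_deriv ?_
  field_simp

theorem mul_exp_div_mul_le_integral_Iio (hs : 0 < s) (hF : Differentiable ℝ F)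
    (hlim : Tendsto (fun ξ => exp (ξ / s) * F ξ) atBot (𝓝 0))
    (hf : IntegrableOn (fun ξ => exp (ξ / s) * f ξ) (Iio x))
    (hle : ∀ ξ, |F ξ + s * deriv F ξ| ≤ f ξ) :
    s * (exp (x / s) * F x) ≤ ∫ ξ in Iio x, exp (ξ / s) * f ξ := by
  have hf' : IntegrableOn (fun ξ => exp (ξ / s) * f ξ) (Iic x) :=
    (integrableOn_Iic_iff_integrableOn_Iio).mpr hf
  have hmeas : AEStronglyMeasurable (fun ξ => exp (ξ / s) * (F ξ + s * deriv F ξ)) :=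
    (by fun_prop : Continuous fun ξ => exp (ξ / s)).measurable.mul
      (hF.continuous.measurable.add ((measurable_deriv F).const_mul s)) |>.aestronglyMeasurable
  have hbound : ∀ ξ, ‖exp (ξ / s) * (F ξ + s * deriv F ξ)‖ ≤ exp (ξ / s) * f ξ := fun ξ => by
    rw [norm_mul, norm_of_nonneg (exp_pos _).le, Real.norm_eq_abs]
    exact mul_le_mul_of_nonneg_left (hle ξ) (exp_pos _).le
  have hderiv_int : IntegrableOn (fun ξ => exp (ξ / s) * (F ξ + s * deriv F ξ)) (Iic x) :=
    hf'.mono' hmeas.restrict (Eventually.of_forall hbound)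
  have hFTC := integral_Iic_of_hasDerivAt_of_tendsto'
    (fun ξ _ => hasDerivAt_mul_exp_div_mul hs.ne' (hF ξ)) hderiv_int
    (by simpa using hlim.const_mul s)
  rw [sub_zero] at hFTC
  rw [← hFTC, ← integral_Iic_eq_integral_Iio]
  exact setIntegral_mono hderiv_int hf' fun ξ => (le_abs_self _).trans (hbound ξ)

/-- The right-hand side is `(1 + s∂)⁻¹ f` at `x`; the paper's operator `(1 - s∂)(1 - s²∂²)⁻¹` is
this inverse. -/
theorem le_resolvent_of_abs_add_deriv_le (hs : 0 < s) (hF : Differentiable ℝ F)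
    (hlim : Tendsto (fun ξ => exp (ξ / s) * F ξ) atBot (𝓝 0))
    (hf : IntegrableOn (fun ξ => exp (ξ / s) * f ξ) (Iio x))
    (hle : ∀ ξ, |F ξ + s * deriv F ξ| ≤ f ξ) :
    F x ≤ 1 / s * exp (-x / s) * ∫ ξ in Iio x, exp (ξ / s) * f ξ := by
  calc F x = 1 / s * exp (-x / s) * (s * (exp (x / s) * F x)) := by
        rw [neg_div, exp_neg]; field_simp
    _ ≤ _ := by
        gcongr
        exact mul_exp_div_mul_le_integral_Iio hs hF hlim hf hle

end Resolvent

/-- **The convolution estimate `G(w,V) ≥ w²/2` of the blow-up proof** (with `w = v/√d`,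
`V = v'`): for `v` continuously differentiable with `v²`, `(v')²` integrable and
`v(ξ) → 0` as `ξ → -∞`,
`(1/√d) e^{-x/√d} ∫_{-∞}^x e^{ξ/√d} (v²/d + v'²/2) dξ ≥ v(x)²/(2d)`. -/
theorem G_lower_bound (d : ℝ) (hd : 0 < d) (v : ℝ → ℝ) (hv : ContDiff ℝ 1 v)
    (h2 : MeasureTheory.Integrable (fun ξ => (v ξ) ^ 2))
    (h2' : MeasureTheory.Integrable (fun ξ => (deriv v ξ) ^ 2))
    (hlim : Filter.Tendsto v Filter.atBot (nhds 0)) (x : ℝ) :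
    (1 / Real.sqrt d) * Real.exp (-x / Real.sqrt d)
      * (∫ ξ in Set.Iio x,
          Real.exp (ξ / Real.sqrt d) * ((v ξ) ^ 2 / d + (deriv v ξ) ^ 2 / 2))
      ≥ (v x) ^ 2 / (2 * d) := by
  set s := √d
  have hs : 0 < s := sqrt_pos.mpr hd
  have hds : d = s ^ 2 := (sq_sqrt hd.le).symm
  have hvd : Differentiable ℝ v := hv.differentiable one_ne_zero
  refine le_resolvent_of_abs_add_deriv_le (F := fun ξ => v ξ ^ 2 / (2 * d)) hs (by fun_prop) ?_
    (((h2.div_const d).add (h2'.div_const 2)).integrableOn_exp_div_mul_Iio hs.le x) fun ξ => ?_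
  · have hexp : Tendsto (fun ξ => exp (ξ / s)) atBot (𝓝 0) :=
      tendsto_exp_atBot.comp (tendsto_id.atBot_div_const hs)
    simpa using hexp.mul ((hlim.pow 2).div_const (2 * d))
  · have hderiv : deriv (fun ξ => v ξ ^ 2 / (2 * d)) ξ = v ξ * deriv v ξ / d := by
      have := ((hvd ξ).hasDerivAt.fun_pow 2).div_const (2 * d)
      rw [this.deriv]
      field_simp
      ring
    rw [hderiv]
    convert abs_sq_div_two_add_mul_le (v ξ / s) (deriv v ξ) using 2 <;>
      · rw [hds]; field_simp
end

section
/- Let d > 0 be a real number and let v : ℝ → ℝ be continuously differentiable with v² and (v')² integrable on ℝ and v(ξ) → 0 as ξ → +∞ and as ξ → −∞. Then for every x ∈ ℝ: ∫_ℝ p_d(x − ξ)·( v(ξ)²/d + v'(ξ)²/2 ) dξ ≥ v(x)²/(2d). -/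
open MeasureTheory Filter Set Real Topology

theorem abs_inv_mul_sq_add_two_mul_le {s : ℝ} (hs : 0 < s) (a b : ℝ) :
    |s⁻¹ * a ^ 2 + 2 * a * b| ≤ 2 * s⁻¹ * a ^ 2 + s * b ^ 2 := by
  have hplus : 0 ≤ s⁻¹ * (a + s * b) ^ 2 := by positivity
  have hminus : 0 ≤ s⁻¹ * (a - s * b) ^ 2 := by positivity
  have hs' : s⁻¹ * s = 1 := inv_mul_cancel₀ hs.ne'
  rw [abs_le]
  constructor <;> nlinarith [sq_nonneg b, sq_nonneg a, inv_pos.2 hs]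

noncomputable def weightedEnergy (s x : ℝ) (v : ℝ → ℝ) (ξ : ℝ) : ℝ :=
  exp (-|x - ξ| / s) * (2 * s⁻¹ * v ξ ^ 2 + s * deriv v ξ ^ 2)

theorem integrable_weightedEnergy {s : ℝ} (hs : 0 < s) {v : ℝ → ℝ}
    (h2 : Integrable fun ξ => v ξ ^ 2) (h2' : Integrable fun ξ => deriv v ξ ^ 2) (x : ℝ) :
    Integrable (weightedEnergy s x v) := by
  refine ((h2.const_mul _).add (h2'.const_mul _)).bdd_mul (c := 1) (by fun_prop) ?_
  refine .of_forall fun ξ => ?_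
  rw [norm_of_nonneg (exp_pos _).le, exp_le_one_iff]
  exact div_nonpos_of_nonpos_of_nonneg (neg_nonpos.2 (abs_nonneg _)) hs.le

theorem weightedEnergy_comp_neg (s x : ℝ) (v : ℝ → ℝ) (ξ : ℝ) :
    weightedEnergy s (-x) (fun η => v (-η)) ξ = weightedEnergy s x v (-ξ) := by
  simp only [weightedEnergy, deriv_comp_neg, neg_sq]
  rw [← abs_neg]
  ring_nf

theorem sq_le_setIntegral_Iic_weightedEnergy {s : ℝ} (hs : 0 < s) {v : ℝ → ℝ}
    (hv : ContDiff ℝ 1 v) (h2 : Integrable fun ξ => v ξ ^ 2)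
    (h2' : Integrable fun ξ => deriv v ξ ^ 2) (hlim : Tendsto v atBot (𝓝 0)) (x : ℝ) :
    v x ^ 2 ≤ ∫ ξ in Iic x, weightedEnergy s x v ξ := by
  set f' : ℝ → ℝ := fun ξ => exp ((ξ - x) / s) * (s⁻¹ * v ξ ^ 2 + 2 * v ξ * deriv v ξ)
  have hderiv (ξ : ℝ) : HasDerivAt (fun η => exp ((η - x) / s) * v η ^ 2) (f' ξ) ξ := by
    have hvξ : HasDerivAt v (deriv v ξ) ξ := (hv.differentiable one_ne_zero ξ).hasDerivAt
    refine ((((hasDerivAt_id' ξ).sub_const x).div_const s).exp.fun_mul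
      (hvξ.fun_pow 2)).congr_deriv ?_
    simp only [f']
    ring
  have hlim' : Tendsto (fun η => exp ((η - x) / s) * v η ^ 2) atBot (𝓝 0) := by
    have hexp : Tendsto (fun η => exp ((η - x) / s)) atBot (𝓝 0) :=
      tendsto_exp_atBot.comp ((tendsto_atBot_add_const_right _ (-x) tendsto_id).atBot_div_const hs)
    simpa using hexp.mul (hlim.pow 2)
  have hbound : ∀ ξ ∈ Iic x, |f' ξ| ≤ weightedEnergy s x v ξ := fun ξ hξ => by
    rw [weightedEnergy, abs_mul, abs_of_pos (exp_pos _), abs_of_nonneg (sub_nonneg.2 hξ),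
      neg_sub]
    exact mul_le_mul_of_nonneg_left (abs_inv_mul_sq_add_two_mul_le hs _ _) (exp_pos _).le
  have hE := (integrable_weightedEnergy hs h2 h2' x).integrableOn (s := Iic x)
  have hf' : IntegrableOn f' (Iic x) := by
    have hcont : Continuous f' := by
      have := hv.continuous; have := hv.continuous_deriv le_rfl; fun_prop
    exact hE.mono' hcont.aestronglyMeasurable
      ((ae_restrict_mem measurableSet_Iic).mono fun ξ hξ => hbound ξ hξ)
  calc v x ^ 2 = ∫ ξ in Iic x, f' ξ := by
        simpa using (integral_Iic_of_hasDerivAt_of_tendsto' (fun ξ _ => hderiv ξ) hf' hlim').symm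
    _ ≤ ∫ ξ in Iic x, weightedEnergy s x v ξ :=
        setIntegral_mono_on hf' hE measurableSet_Iic fun ξ hξ => (le_abs_self _).trans (hbound ξ hξ)

theorem sq_le_setIntegral_Ioi_weightedEnergy {s : ℝ} (hs : 0 < s) {v : ℝ → ℝ}
    (hv : ContDiff ℝ 1 v) (h2 : Integrable fun ξ => v ξ ^ 2)
    (h2' : Integrable fun ξ => deriv v ξ ^ 2) (hlim : Tendsto v atTop (𝓝 0)) (x : ℝ) :
    v x ^ 2 ≤ ∫ ξ in Ioi x, weightedEnergy s x v ξ := by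
  have hreflect := sq_le_setIntegral_Iic_weightedEnergy hs (v := fun η => v (-η))
    (hv.comp contDiff_neg) h2.comp_neg (by simpa only [deriv_comp_neg, neg_sq] using h2'.comp_neg)
    (hlim.comp tendsto_neg_atBot_atTop) (-x)
  simpa only [neg_neg, weightedEnergy_comp_neg, integral_comp_neg_Iic] using hreflect

theorem two_mul_sq_le_integral_weightedEnergy {s : ℝ} (hs : 0 < s) {v : ℝ → ℝ}
    (hv : ContDiff ℝ 1 v) (h2 : Integrable fun ξ => v ξ ^ 2)
    (h2' : Integrable fun ξ => deriv v ξ ^ 2) (hlimBot : Tendsto v atBot (𝓝 0))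
    (hlimTop : Tendsto v atTop (𝓝 0)) (x : ℝ) :
    2 * v x ^ 2 ≤ ∫ ξ, weightedEnergy s x v ξ := by
  have hE := integrable_weightedEnergy hs h2 h2' x
  rw [← intervalIntegral.integral_Iic_add_Ioi hE.integrableOn hE.integrableOn]
  linarith [sq_le_setIntegral_Iic_weightedEnergy hs hv h2 h2' hlimBot x,
    sq_le_setIntegral_Ioi_weightedEnergy hs hv h2 h2' hlimTop x]

theorem weightedEnergy_sqrt_eq {d : ℝ} (hd : 0 < d) (x : ℝ) (v : ℝ → ℝ) (ξ : ℝ) :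
    weightedEnergy (√d) x v ξ = 4 * d * (pd d (x - ξ) * (v ξ ^ 2 / d + deriv v ξ ^ 2 / 2)) := by
  have hs : 0 < √d := sqrt_pos.2 hd
  have hsq : √d ^ 2 = d := sq_sqrt hd.le
  rw [weightedEnergy, pd]
  field_simp
  rw [hsq]
  ring

/-- **The central convolution inequality `p_d ∗ (w² + V²/2) ≥ w²/2` of the blow-up
proof** (with `w = v/√d`, `V = v'`): for `v` continuously differentiable with `v²`,
`(v')²` integrable and `v(ξ) → 0` as `ξ → ±∞`,
`∫ p_d(x-ξ)(v²/d + v'²/2) dξ ≥ v(x)²/(2d)`. -/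
theorem convolution_lower_bound (d : ℝ) (hd : 0 < d) (v : ℝ → ℝ) (hv : ContDiff ℝ 1 v)
    (h2 : MeasureTheory.Integrable (fun ξ => (v ξ) ^ 2))
    (h2' : MeasureTheory.Integrable (fun ξ => (deriv v ξ) ^ 2))
    (hlimTop : Filter.Tendsto v Filter.atTop (nhds 0))
    (hlimBot : Filter.Tendsto v Filter.atBot (nhds 0)) (x : ℝ) :
    (∫ ξ : ℝ, pd d (x - ξ) * ((v ξ) ^ 2 / d + (deriv v ξ) ^ 2 / 2))
      ≥ (v x) ^ 2 / (2 * d) := by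
  have hmain := two_mul_sq_le_integral_weightedEnergy (sqrt_pos.2 hd) hv h2 h2' hlimBot hlimTop x
  simp only [weightedEnergy_sqrt_eq hd, integral_const_mul] at hmain
  rw [ge_iff_le, div_le_iff₀ (by positivity)]
  linarith
end

section
/- Let d > 0 be a real number, T ∈ (0, ∞], and let v, n : [0,T) × ℝ → ℝ be such that n has continuous partial derivatives ∂_t n and ∂_x n, v is continuous with continuous ∂_x v, and the transport equation ∂_t n + d·v·∂_x n + 2d·(∂_x v)·n = 0 holds at every point. Let q : [0,T) × ℝ → ℝ satisfy q(0,x) = x, ∂_t q(t,x) = d·v(t, q(t,x)), and suppose ∂_x q exists and satisfies ∂_t(∂_x q)(t,x) = d·(∂_x v)(t, q(t,x))·∂_x q(t,x). Then for all (t,x) ∈ [0,T) × ℝ: n(t, q(t,x))·(∂_x q(t,x))² = n(0,x). -/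
/-!
Along a particle path `s ↦ q(s,x)` the transport equation and the equation for `∂ₓq` give
`d/ds [n(s,q) (∂ₓq)²] = (∂ₜn + d v ∂ₓn + 2d (∂ₓv) n)(s,q) · (∂ₓq)² = 0`, so this quantity is
constant in time. The only analytic input is the chain rule for `s ↦ n(s, q(s,x))`, which holds
because `∂ₓn` is jointly continuous and `∂ₜn` exists.
-/

open scoped ENNReal
open Set Filter Topology Asymptotics

theorem isLittleO_sub_sub_deriv_mul_sub {f fₓ : ℝ → ℝ → ℝ} {c : ℝ → ℝ} {S : Set ℝ} {t y₀ : ℝ}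
    (hfx : ∀ s ∈ S, ∀ y, HasDerivAt (f s) (fₓ s y) y)
    (hfₓ : ContinuousWithinAt (fun p : ℝ × ℝ => fₓ p.1 p.2) (Prod.fst ⁻¹' S) (t, y₀))
    (hc : Tendsto c (𝓝[S] t) (𝓝 y₀)) :
    (fun s => f s (c s) - f s y₀ - fₓ t y₀ * (c s - y₀)) =o[𝓝[S] t] (fun s => c s - y₀) := by
  refine isLittleO_iff.2 fun ε hε => ?_
  have hnear : ∀ᶠ p in 𝓝[S] t ×ˢ 𝓝 y₀, dist (fₓ p.1 p.2) (fₓ t y₀) ≤ ε := by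
    rw [← nhdsWithin_univ, ← nhdsWithin_prod_eq, prod_univ]
    exact hfₓ (Metric.closedBall_mem_nhds _ hε)
  obtain ⟨P, hP, Q, hQ, hPQ⟩ := eventually_prod_iff.mp hnear
  obtain ⟨δ, hδ, hball⟩ := Metric.eventually_nhds_iff_ball.mp hQ
  filter_upwards [hP, self_mem_nhdsWithin, hc (Metric.ball_mem_nhds y₀ hδ)] with s hsP hsS hcs
  have hderiv : ∀ y ∈ Metric.ball y₀ δ, HasDerivWithinAt (fun y => f s y - fₓ t y₀ * y)
      (fₓ s y - fₓ t y₀) (Metric.ball y₀ δ) y := fun y _ =>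
    ((hfx s hsS y).sub ((hasDerivAt_id y).const_mul _)).hasDerivWithinAt.congr_deriv (by ring)
  calc ‖f s (c s) - f s y₀ - fₓ t y₀ * (c s - y₀)‖
      = ‖(f s (c s) - fₓ t y₀ * c s) - (f s y₀ - fₓ t y₀ * y₀)‖ := by ring_nf
    _ ≤ ε * ‖c s - y₀‖ := (convex_ball y₀ δ).norm_image_sub_le_of_norm_hasDerivWithin_le hderiv
      (fun y hy => hPQ hsP (hball y hy)) (Metric.mem_ball_self hδ) hcs

theorem hasDerivWithinAt_comp_curve {f fₓ : ℝ → ℝ → ℝ} {c : ℝ → ℝ} {S : Set ℝ} {t a c' : ℝ}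
    (hft : HasDerivWithinAt (fun s => f s (c t)) a S t)
    (hfx : ∀ s ∈ S, ∀ y, HasDerivAt (f s) (fₓ s y) y)
    (hfₓ : ContinuousWithinAt (fun p : ℝ × ℝ => fₓ p.1 p.2) (Prod.fst ⁻¹' S) (t, c t))
    (hc : HasDerivWithinAt c c' S t) :
    HasDerivWithinAt (fun s => f s (c s)) (a + fₓ t (c t) * c') S t := by
  have hspace := (isLittleO_sub_sub_deriv_mul_sub hfx hfₓ hc.continuousWithinAt).trans_isBigO
    hc.hasFDerivWithinAt.isBigO_sub
  rw [hasDerivWithinAt_iff_isLittleO] at hft hc ⊢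
  refine ((hspace.add hft).add (hc.const_mul_left (fₓ t (c t)))).congr_left fun s => ?_
  simp only [smul_eq_mul]
  ring

theorem eq_of_hasDerivWithinAt_zero_of_Icc_subset {E : Type*} [NormedAddCommGroup E]
    [NormedSpace ℝ E] {f : ℝ → E} {S : Set ℝ} {a b : ℝ} (hab : a ≤ b) (hS : Icc a b ⊆ S)
    (hf : ∀ s ∈ S, HasDerivWithinAt f 0 S s) : f b = f a := by
  have := norm_image_sub_le_of_norm_deriv_le_segment' (fun s hs => (hf s (hS hs)).mono hS)
    (fun _ _ => norm_zero.le) b ⟨hab, le_rfl⟩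
  simpa only [zero_mul, norm_le_zero_iff, sub_eq_zero] using this

theorem lagrangian_conservation_general (d : ℝ) (T : ℝ≥0∞)
    (v n q : ℝ → ℝ → ℝ)
    -- `n` has partial derivatives ∂ₜn and ∂ₓn, continuous on `[0,T) × ℝ`
    (hnt : ∀ t x : ℝ, 0 ≤ t → ENNReal.ofReal t < T →
      DifferentiableAt ℝ (fun s => n s x) t)
    (hnx : ∀ t x : ℝ, 0 ≤ t → ENNReal.ofReal t < T → DifferentiableAt ℝ (n t) x)
    (hnxc : ContinuousOn (fun p : ℝ × ℝ => deriv (n p.1) p.2)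
      {p : ℝ × ℝ | 0 ≤ p.1 ∧ ENNReal.ofReal p.1 < T})
    -- the transport equation holds at every point of `[0,T) × ℝ`
    (heq : ∀ t x : ℝ, 0 ≤ t → ENNReal.ofReal t < T →
      deriv (fun s => n s x) t + d * v t x * deriv (n t) x
        + 2 * d * deriv (v t) x * n t x = 0)
    -- the Lagrangian flow
    (hq0 : ∀ x : ℝ, q 0 x = x)
    (hqt : ∀ t x : ℝ, 0 ≤ t → ENNReal.ofReal t < T →
      HasDerivAt (fun s => q s x) (d * v t (q t x)) t)
    -- ∂ₓq exists and satisfies ∂ₜ(∂ₓq) = d (∂ₓv)(t, q) ∂ₓq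
    (hqxt : ∀ t x : ℝ, 0 ≤ t → ENNReal.ofReal t < T →
      HasDerivAt (fun s => deriv (q s) x)
        (d * deriv (v t) (q t x) * deriv (q t) x) t) :
    ∀ t x : ℝ, 0 ≤ t → ENNReal.ofReal t < T →
      n t (q t x) * (deriv (q t) x) ^ 2 = n 0 x := by
  intro t x ht htT
  set S : Set ℝ := {s | 0 ≤ s ∧ ENNReal.ofReal s < T}
  have hIcc : Icc 0 t ⊆ S := fun s hs =>
    ⟨hs.1, (ENNReal.ofReal_le_ofReal hs.2).trans_lt htT⟩
  have hconserved : ∀ s ∈ S,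
      HasDerivWithinAt (fun s => n s (q s x) * deriv (q s) x ^ 2) 0 S s := by
    rintro s ⟨hs, hsT⟩
    have hn_along := hasDerivWithinAt_comp_curve (S := S)
      (hnt s _ hs hsT).hasDerivAt.hasDerivWithinAt (fun u hu y => (hnx u y hu.1 hu.2).hasDerivAt)
      (hnxc _ ⟨hs, hsT⟩) (hqt s x hs hsT).hasDerivWithinAt
    refine (hn_along.mul ((hqxt s x hs hsT).hasDerivWithinAt.fun_pow 2)).congr_deriv ?_
    linear_combination deriv (q s) x ^ 2 * heq s (q s x) hs hsT
  have hq0_deriv : deriv (q 0) x = 1 := by simp [funext hq0]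
  simpa [hq0, hq0_deriv] using eq_of_hasDerivWithinAt_zero_of_Icc_subset ht hIcc hconserved

/-- **Lagrangian conservation law (Lemma 2.1).** If `n` solves the transport equation
`∂ₜn + d v ∂ₓn + 2d (∂ₓv) n = 0` on `[0,T) × ℝ` and `q` is the flow of `d·v`, then
`n(t, q(t,x)) (∂ₓq(t,x))² = n(0,x)`.  Here `T ∈ (0,∞]` is encoded as `T : ℝ≥0∞` with
`0 < T`, and membership of a time `t` in `[0,T)` as `0 ≤ t ∧ ENNReal.ofReal t < T`. -/
theorem lagrangian_conservation (d : ℝ) (hd : 0 < d) (T : ℝ≥0∞) (hT : 0 < T)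
    (v n q : ℝ → ℝ → ℝ)
    -- `n` has partial derivatives ∂ₜn and ∂ₓn, continuous on `[0,T) × ℝ`
    (hnt : ∀ t x : ℝ, 0 ≤ t → ENNReal.ofReal t < T →
      DifferentiableAt ℝ (fun s => n s x) t)
    (hnx : ∀ t x : ℝ, 0 ≤ t → ENNReal.ofReal t < T → DifferentiableAt ℝ (n t) x)
    (hntc : ContinuousOn (fun p : ℝ × ℝ => deriv (fun s => n s p.2) p.1)
      {p : ℝ × ℝ | 0 ≤ p.1 ∧ ENNReal.ofReal p.1 < T})
    (hnxc : ContinuousOn (fun p : ℝ × ℝ => deriv (n p.1) p.2)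
      {p : ℝ × ℝ | 0 ≤ p.1 ∧ ENNReal.ofReal p.1 < T})
    -- `v` is continuous with continuous ∂ₓv
    (hvc : ContinuousOn (fun p : ℝ × ℝ => v p.1 p.2)
      {p : ℝ × ℝ | 0 ≤ p.1 ∧ ENNReal.ofReal p.1 < T})
    (hvx : ∀ t x : ℝ, 0 ≤ t → ENNReal.ofReal t < T → DifferentiableAt ℝ (v t) x)
    (hvxc : ContinuousOn (fun p : ℝ × ℝ => deriv (v p.1) p.2)
      {p : ℝ × ℝ | 0 ≤ p.1 ∧ ENNReal.ofReal p.1 < T})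
    -- the transport equation holds at every point of `[0,T) × ℝ`
    (heq : ∀ t x : ℝ, 0 ≤ t → ENNReal.ofReal t < T →
      deriv (fun s => n s x) t + d * v t x * deriv (n t) x
        + 2 * d * deriv (v t) x * n t x = 0)
    -- the Lagrangian flow
    (hq0 : ∀ x : ℝ, q 0 x = x)
    (hqt : ∀ t x : ℝ, 0 ≤ t → ENNReal.ofReal t < T →
      HasDerivAt (fun s => q s x) (d * v t (q t x)) t)
    -- ∂ₓq exists and satisfies ∂ₜ(∂ₓq) = d (∂ₓv)(t, q) ∂ₓq
    (hqx : ∀ t x : ℝ, 0 ≤ t → ENNReal.ofReal t < T → DifferentiableAt ℝ (q t) x)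
    (hqxt : ∀ t x : ℝ, 0 ≤ t → ENNReal.ofReal t < T →
      HasDerivAt (fun s => deriv (q s) x)
        (d * deriv (v t) (q t x) * deriv (q t) x) t) :
    ∀ t x : ℝ, 0 ≤ t → ENNReal.ofReal t < T →
      n t (q t x) * (deriv (q t) x) ^ 2 = n 0 x :=
  lagrangian_conservation_general d T v n q hnt hnx hnxc heq hq0 hqt hqxt
end

section
/- Under the hypotheses of the Lagrangian conservation law — namely d > 0, T ∈ (0,∞], v, n : [0,T) × ℝ → ℝ with n having continuous ∂_t n and ∂_x n, ∂_x v continuous, ∂_t n + d·v·∂_x n + 2d·(∂_x v)·n = 0 everywhere, q(0,x) = x, ∂_t q(t,x) = d·v(t,q(t,x)), and ∂_t(∂_x q)(t,x) = d·(∂_x v)(t,q(t,x))·∂_x q(t,x) — assume additionally that for each t ∈ [0,T) the map q(t,·) : ℝ → ℝ is surjective, that ∂_x q(t,x) ≠ 0 for all (t,x), and that n(0,x) ≥ 0 for all x ∈ ℝ. Then n(t,y) ≥ 0 for all t ∈ [0,T) and y ∈ ℝ. -/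
open scoped ENNReal

/-!
Along a characteristic `s ↦ q(s,x)` the quantity `n(s, q(s,x)) · (∂ₓq(s,x))²` has zero time
derivative: the transport equation turns the derivative of `n(s, q(s,x))` into `-2d(∂ₓv)n`, and
`∂ₜ(∂ₓq)² = 2d(∂ₓv)(∂ₓq)²` cancels it. Hence `n(t, q(t,x)) (∂ₓq(t,x))² = n(0,x) ≥ 0`, and as
`∂ₓq ≠ 0` and `q(t,·)` is onto, `n(t,·) ≥ 0`. The one analytic point is the chain rule for
`s ↦ n(s, q(s,x))`, which needs `∂ₜn` to be continuous jointly in both variables.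
-/

open Filter Topology Set Function Asymptotics
open scoped Convex

section AlongCurve

variable {F : Type*} [NormedAddCommGroup F] [NormedSpace ℝ F]
  {f f' : ℝ → ℝ → F} {γ : ℝ → ℝ} {I : Set ℝ} {s₀ : ℝ}

theorem hasDerivWithinAt_sub_of_continuousWithinAt_partialDeriv (hI : Convex ℝ I)
    (hs₀ : s₀ ∈ I) (hγ : ContinuousWithinAt γ I s₀)
    (hf : ∀ s ∈ I, ∀ y, HasDerivWithinAt (f · y) (f' s y) I s)
    (hf' : ContinuousWithinAt (uncurry f') (I ×ˢ univ) (s₀, γ s₀)) :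
    HasDerivWithinAt (fun s => f s (γ s) - f s₀ (γ s)) (f' s₀ (γ s₀)) I s₀ := by
  set c := f' s₀ (γ s₀)
  have hmem : ∀ᶠ s in 𝓝[I] s₀, s ∈ I := eventually_mem_nhdsWithin
  have hseg : ∀ᶠ s in 𝓝[I] s₀, [s₀ -[ℝ] s] ⊆ I :=
    hmem.mono fun s hs => hI.segment_subset hs₀ hs
  have hpath : Tendsto (fun p : ℝ × ℝ => (p.2, γ p.1)) (𝓝[I] s₀ ×ˢ 𝓝[I] s₀)
      (𝓝[I ×ˢ univ] (s₀, γ s₀)) := by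
    refine tendsto_nhdsWithin_iff.2 ⟨?_, (hmem.prod_inr _).mono fun p hp => ⟨hp, trivial⟩⟩
    exact (tendsto_nhdsWithin_of_tendsto_nhds tendsto_id |>.comp tendsto_snd).prodMk_nhds
      (hγ.tendsto.comp tendsto_fst)
  rw [hasDerivWithinAt_iff_isLittleO, isLittleO_iff]
  intro ε hε
  have hclose : ∀ᶠ s in 𝓝[I] s₀, ∀ σ ∈ [s₀ -[ℝ] s], ‖f' σ (γ s) - c‖ < ε := by
    refine Eventually.segment_of_prod_nhdsWithin tendsto_const_nhds
      (tendsto_nhdsWithin_of_tendsto_nhds tendsto_id) ?_ hseg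
    simpa only [← dist_eq_norm] using!
      (hf'.tendsto.comp hpath).eventually (Metric.ball_mem_nhds c hε)
  filter_upwards [hseg, hclose] with s hseg hclose
  have hmvt := (convex_segment s₀ s).norm_image_sub_le_of_norm_hasDerivWithin_le
    (f := fun σ => f σ (γ s) - σ • c) (f' := fun σ => f' σ (γ s) - c)
    (fun σ hσ => ((hf σ (hseg hσ) (γ s)).mono hseg).sub
      (by simpa using ((hasDerivAt_id σ).smul_const c).hasDerivWithinAt))
    (fun σ hσ => (hclose σ hσ).le) (left_mem_segment ..) (right_mem_segment ..)
  convert hmvt using 2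
  simp only [sub_self, sub_zero, sub_smul]
  abel

theorem hasDerivWithinAt_along_curve (hI : Convex ℝ I) (hs₀ : s₀ ∈ I) {γ' : ℝ} {fx : F}
    (hγ : HasDerivWithinAt γ γ' I s₀)
    (hf : ∀ s ∈ I, ∀ y, HasDerivWithinAt (f · y) (f' s y) I s)
    (hf' : ContinuousWithinAt (uncurry f') (I ×ˢ univ) (s₀, γ s₀))
    (hfx : HasDerivAt (f s₀) fx (γ s₀)) :
    HasDerivWithinAt (fun s => f s (γ s)) (f' s₀ (γ s₀) + γ' • fx) I s₀ := by
  have := (hasDerivWithinAt_sub_of_continuousWithinAt_partialDeriv hI hs₀ hγ.continuousWithinAt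
    hf hf').add (hfx.scomp_hasDerivWithinAt s₀ hγ)
  convert this using 1
  ext s
  simp

end AlongCurve

theorem hasDerivWithinAt_mul_sq_eq_zero_of_transport {N J : ℝ → ℝ} {I : Set ℝ}
    {s d u ux nt nx : ℝ} (hN : HasDerivWithinAt N (nt + d * u * nx) I s)
    (hJ : HasDerivWithinAt J (d * ux * J s) I s)
    (htransport : nt + d * u * nx + 2 * d * ux * N s = 0) :
    HasDerivWithinAt (fun σ => N σ * J σ ^ 2) 0 I s := by
  refine (hN.mul (hJ.pow 2)).congr_deriv ?_
  simp only [Pi.pow_apply]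
  linear_combination (J s ^ 2) * htransport

theorem momentum_sign_persistence_general (d : ℝ) (T : ℝ≥0∞)
    (v n q : ℝ → ℝ → ℝ)
    -- `n` has partial derivatives ∂ₜn and ∂ₓn, continuous on `[0,T) × ℝ`
    (hnt : ∀ t x : ℝ, 0 ≤ t → ENNReal.ofReal t < T →
      DifferentiableAt ℝ (fun s => n s x) t)
    (hnx : ∀ t x : ℝ, 0 ≤ t → ENNReal.ofReal t < T → DifferentiableAt ℝ (n t) x)
    (hntc : ContinuousOn (fun p : ℝ × ℝ => deriv (fun s => n s p.2) p.1)
      {p : ℝ × ℝ | 0 ≤ p.1 ∧ ENNReal.ofReal p.1 < T})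
    -- the transport equation holds at every point of `[0,T) × ℝ`
    (heq : ∀ t x : ℝ, 0 ≤ t → ENNReal.ofReal t < T →
      deriv (fun s => n s x) t + d * v t x * deriv (n t) x
        + 2 * d * deriv (v t) x * n t x = 0)
    -- the Lagrangian flow
    (hq0 : ∀ x : ℝ, q 0 x = x)
    (hqt : ∀ t x : ℝ, 0 ≤ t → ENNReal.ofReal t < T →
      HasDerivAt (fun s => q s x) (d * v t (q t x)) t)
    -- ∂ₓq exists and satisfies ∂ₜ(∂ₓq) = d (∂ₓv)(t, q) ∂ₓq
    (hqxt : ∀ t x : ℝ, 0 ≤ t → ENNReal.ofReal t < T →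
      HasDerivAt (fun s => deriv (q s) x)
        (d * deriv (v t) (q t x) * deriv (q t) x) t)
    -- additional hypotheses
    (hsurj : ∀ t : ℝ, 0 ≤ t → ENNReal.ofReal t < T → Function.Surjective (q t))
    (hne : ∀ t x : ℝ, 0 ≤ t → ENNReal.ofReal t < T → deriv (q t) x ≠ 0)
    (hn0 : ∀ x : ℝ, 0 ≤ n 0 x) :
    ∀ t : ℝ, 0 ≤ t → ENNReal.ofReal t < T → ∀ y : ℝ, 0 ≤ n t y := by
  intro t ht htT y
  obtain ⟨x, rfl⟩ := hsurj t ht htT y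
  have hI : ∀ s ∈ Icc 0 t, 0 ≤ s ∧ ENNReal.ofReal s < T := fun s hs =>
    ⟨hs.1, (ENNReal.ofReal_le_ofReal hs.2).trans_lt htT⟩
  have hflow : ∀ s ∈ Icc 0 t,
      HasDerivWithinAt (fun σ => n σ (q σ x) * deriv (q σ) x ^ 2) 0 (Icc 0 t) s := by
    intro s hs
    obtain ⟨hs0, hsT⟩ := hI s hs
    refine hasDerivWithinAt_mul_sq_eq_zero_of_transport ?_
      (hqxt s x hs0 hsT).hasDerivWithinAt (heq s (q s x) hs0 hsT)
    simpa only [smul_eq_mul] using hasDerivWithinAt_along_curve (convex_Icc 0 t) hs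
      (hqt s x hs0 hsT).hasDerivWithinAt (f' := fun σ y => deriv (fun τ => n τ y) σ)
      (fun σ hσ y => (hnt σ y (hI σ hσ).1 (hI σ hσ).2).hasDerivAt.hasDerivWithinAt)
      ((hntc (s, q s x) ⟨hs0, hsT⟩).mono fun p hp => hI p.1 hp.1)
      (hnx s (q s x) hs0 hsT).hasDerivAt
  have hconserved : n t (q t x) * deriv (q t) x ^ 2 = n 0 x := by
    have := (convex_Icc 0 t).norm_image_sub_le_of_norm_hasDerivWithin_le hflow
      (fun _ _ => norm_zero.le) (left_mem_Icc.2 ht) (right_mem_Icc.2 ht)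
    simpa [sub_eq_zero, hq0, show q 0 = id from funext hq0] using this
  exact nonneg_of_mul_nonneg_left (hconserved ▸ hn0 x) (pow_two_pos_of_ne_zero (hne t x ht htT))

/-- **Sign persistence of the momentum along the Lagrangian flow.** Under the
hypotheses of the Lagrangian conservation law, if moreover each `q(t,·)` is surjective,
`∂ₓq` never vanishes and `n(0,·) ≥ 0`, then `n(t,y) ≥ 0` for all `t ∈ [0,T)`, `y ∈ ℝ`.
Here `T ∈ (0,∞]` is encoded as `T : ℝ≥0∞` with `0 < T`, and membership of a time `t`
in `[0,T)` as `0 ≤ t ∧ ENNReal.ofReal t < T`. -/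
theorem momentum_sign_persistence (d : ℝ) (hd : 0 < d) (T : ℝ≥0∞) (hT : 0 < T)
    (v n q : ℝ → ℝ → ℝ)
    -- `n` has partial derivatives ∂ₜn and ∂ₓn, continuous on `[0,T) × ℝ`
    (hnt : ∀ t x : ℝ, 0 ≤ t → ENNReal.ofReal t < T →
      DifferentiableAt ℝ (fun s => n s x) t)
    (hnx : ∀ t x : ℝ, 0 ≤ t → ENNReal.ofReal t < T → DifferentiableAt ℝ (n t) x)
    (hntc : ContinuousOn (fun p : ℝ × ℝ => deriv (fun s => n s p.2) p.1)
      {p : ℝ × ℝ | 0 ≤ p.1 ∧ ENNReal.ofReal p.1 < T})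
    (hnxc : ContinuousOn (fun p : ℝ × ℝ => deriv (n p.1) p.2)
      {p : ℝ × ℝ | 0 ≤ p.1 ∧ ENNReal.ofReal p.1 < T})
    -- `v` is continuous with continuous ∂ₓv
    (hvc : ContinuousOn (fun p : ℝ × ℝ => v p.1 p.2)
      {p : ℝ × ℝ | 0 ≤ p.1 ∧ ENNReal.ofReal p.1 < T})
    (hvx : ∀ t x : ℝ, 0 ≤ t → ENNReal.ofReal t < T → DifferentiableAt ℝ (v t) x)
    (hvxc : ContinuousOn (fun p : ℝ × ℝ => deriv (v p.1) p.2)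
      {p : ℝ × ℝ | 0 ≤ p.1 ∧ ENNReal.ofReal p.1 < T})
    -- the transport equation holds at every point of `[0,T) × ℝ`
    (heq : ∀ t x : ℝ, 0 ≤ t → ENNReal.ofReal t < T →
      deriv (fun s => n s x) t + d * v t x * deriv (n t) x
        + 2 * d * deriv (v t) x * n t x = 0)
    -- the Lagrangian flow
    (hq0 : ∀ x : ℝ, q 0 x = x)
    (hqt : ∀ t x : ℝ, 0 ≤ t → ENNReal.ofReal t < T →
      HasDerivAt (fun s => q s x) (d * v t (q t x)) t)
    -- ∂ₓq exists and satisfies ∂ₜ(∂ₓq) = d (∂ₓv)(t, q) ∂ₓq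
    (hqx : ∀ t x : ℝ, 0 ≤ t → ENNReal.ofReal t < T → DifferentiableAt ℝ (q t) x)
    (hqxt : ∀ t x : ℝ, 0 ≤ t → ENNReal.ofReal t < T →
      HasDerivAt (fun s => deriv (q s) x)
        (d * deriv (v t) (q t x) * deriv (q t) x) t)
    -- additional hypotheses
    (hsurj : ∀ t : ℝ, 0 ≤ t → ENNReal.ofReal t < T → Function.Surjective (q t))
    (hne : ∀ t x : ℝ, 0 ≤ t → ENNReal.ofReal t < T → deriv (q t) x ≠ 0)
    (hn0 : ∀ x : ℝ, 0 ≤ n 0 x) :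
    ∀ t : ℝ, 0 ≤ t → ENNReal.ofReal t < T → ∀ y : ℝ, 0 ≤ n t y :=
  momentum_sign_persistence_general d T v n q hnt hnx hntc heq hq0 hqt hqxt hsurj hne hn0
end

section
/- Let d > 0 be a real number, let I ⊆ ℝ be an interval, and let v, P : I × ℝ → ℝ be such that v has continuous partial derivatives ∂_t v, ∂_x v, ∂_x² v, ∂_t∂_x v (with ∂_t∂_x v = ∂_x∂_t v) and P has continuous ∂_x P and ∂_x² P. Assume that at every point: P − d·∂_x²P = d·v² + (d²/2)·(∂_x v)², and ∂_t v + d·v·∂_x v = −∂_x P. Then at every point of I × ℝ the local conservation law holds: ∂_t( v² + d·(∂_x v)² ) + ∂_x( 2·v·P + d²·v·(∂_x v)² ) = 0. -/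
/-- **Local (divergence-form) energy conservation law.** If on an interval `I` of times
`P - d∂ₓ²P = d v² + (d²/2)(∂ₓv)²` and `∂ₜv + d v ∂ₓv = -∂ₓP`, then
`∂ₜ(v² + d(∂ₓv)²) + ∂ₓ(2 v P + d² v (∂ₓv)²) = 0` at every point of `I × ℝ`. -/
theorem local_energy_conservation (d : ℝ) (hd : 0 < d) (I : Set ℝ)
    (hI : Set.OrdConnected I) (v P : ℝ → ℝ → ℝ)
    -- `v` has continuous partial derivatives ∂ₜv, ∂ₓv, ∂ₓ²v, ∂ₜ∂ₓv
    (hvt : ∀ t ∈ I, ∀ x : ℝ, DifferentiableAt ℝ (fun s => v s x) t)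
    (hvx : ∀ t ∈ I, ∀ x : ℝ, DifferentiableAt ℝ (v t) x)
    (hvxx : ∀ t ∈ I, ∀ x : ℝ, DifferentiableAt ℝ (deriv (v t)) x)
    (hvtx : ∀ t ∈ I, ∀ x : ℝ, DifferentiableAt ℝ (fun s => deriv (v s) x) t)
    (hvtc : ContinuousOn (fun p : ℝ × ℝ => deriv (fun s => v s p.2) p.1)
      (I ×ˢ Set.univ))
    (hvxc : ContinuousOn (fun p : ℝ × ℝ => deriv (v p.1) p.2) (I ×ˢ Set.univ))
    (hvxxc : ContinuousOn (fun p : ℝ × ℝ => deriv (deriv (v p.1)) p.2) (I ×ˢ Set.univ))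
    (hvtxc : ContinuousOn (fun p : ℝ × ℝ => deriv (fun s => deriv (v s) p.2) p.1)
      (I ×ˢ Set.univ))
    -- mixed partials commute: ∂ₜ∂ₓv = ∂ₓ∂ₜv
    (hcomm : ∀ t ∈ I, ∀ x : ℝ, deriv (fun s => deriv (v s) x) t
      = deriv (fun y => deriv (fun s => v s y) t) x)
    -- `P` has continuous ∂ₓP and ∂ₓ²P
    (hPx : ∀ t ∈ I, ∀ x : ℝ, DifferentiableAt ℝ (P t) x)
    (hPxx : ∀ t ∈ I, ∀ x : ℝ, DifferentiableAt ℝ (deriv (P t)) x)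
    (hPxc : ContinuousOn (fun p : ℝ × ℝ => deriv (P p.1) p.2) (I ×ˢ Set.univ))
    (hPxxc : ContinuousOn (fun p : ℝ × ℝ => deriv (deriv (P p.1)) p.2) (I ×ˢ Set.univ))
    -- the elliptic relation for P
    (hell : ∀ t ∈ I, ∀ x : ℝ, P t x - d * deriv (deriv (P t)) x
      = d * (v t x) ^ 2 + d ^ 2 / 2 * (deriv (v t) x) ^ 2)
    -- the evolution equation
    (heq : ∀ t ∈ I, ∀ x : ℝ,
      deriv (fun s => v s x) t + d * v t x * deriv (v t) x = -deriv (P t) x) :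
    ∀ t ∈ I, ∀ x : ℝ,
      deriv (fun s => (v s x) ^ 2 + d * (deriv (v s) x) ^ 2) t
        + deriv (fun y => 2 * v t y * P t y + d ^ 2 * v t y * (deriv (v t) y) ^ 2) x
      = 0 := by

  intro t ht x
  have hv_t := (hvt t ht x).hasDerivAt
  have hv_x := (hvx t ht x).hasDerivAt
  have hv_xx := (hvxx t ht x).hasDerivAt
  have hv_tx := (hvtx t ht x).hasDerivAt
  have hP_x := (hPx t ht x).hasDerivAt
  have hP_xx := (hPxx t ht x).hasDerivAt
  -- x-derivative of ∂ₜv via the equation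
  have hgeq : (fun y => deriv (fun s => v s y) t)
      = fun y => -(deriv (P t) y) - d * v t y * deriv (v t) y := by
    funext y
    have := heq t ht y
    linarith
  have Hg : HasDerivAt (fun y => -(deriv (P t) y) - d * v t y * deriv (v t) y)
      (-(deriv (deriv (P t)) x)
        - (d * deriv (v t) x * deriv (v t) x + d * v t x * deriv (deriv (v t)) x)) x := by
    exact hP_xx.neg.sub ((hv_x.const_mul d).mul hv_xx)
  have hvtx_eq : deriv (fun s => deriv (v s) x) t
      = -(deriv (deriv (P t)) x)
        - (d * deriv (v t) x * deriv (v t) x + d * v t x * deriv (deriv (v t)) x) := by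
    rw [hcomm t ht x, hgeq]
    exact Hg.deriv
  have HT : HasDerivAt (fun s => (v s x) ^ 2 + d * (deriv (v s) x) ^ 2)
      ((2 : ℕ) * v t x ^ 1 * deriv (fun s => v s x) t
        + d * ((2 : ℕ) * (deriv (v t) x) ^ 1 * deriv (fun s => deriv (v s) x) t)) t :=
    (hv_t.pow 2).add ((hv_tx.pow 2).const_mul d)
  have HX : HasDerivAt (fun y => 2 * v t y * P t y + d ^ 2 * v t y * (deriv (v t) y) ^ 2)
      ((2 * deriv (v t) x * P t x + 2 * v t x * deriv (P t) x)
        + (d ^ 2 * deriv (v t) x * (deriv (v t) x) ^ 2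
          + d ^ 2 * v t x * ((2 : ℕ) * (deriv (v t) x) ^ 1 * deriv (deriv (v t)) x))) x :=
    ((hv_x.const_mul 2).mul hP_x).add ((hv_x.const_mul (d ^ 2)).mul (hv_xx.pow 2))
  rw [HT.deriv, HX.deriv]
  push_cast
  linear_combination (2 * v t x) * heq t ht x + (2 * d * deriv (v t) x) * hvtx_eq
    + (2 * deriv (v t) x) * hell t ht x
end

section
/- Let c > 0, T ∈ (0, ∞], and let A, B : [0,T) → ℝ be differentiable functions with A(0) > 0, B(0) < 0, and suppose that for all t ∈ [0,T): A'(t) ≥ −c·A(t)·B(t) and B'(t) ≤ c·A(t)·B(t). Then for all t ∈ [0,T): A(t) ≥ A(0) > 0 and B(t) ≤ B(0) < 0. -/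
/-! In the region `A ≥ A 0 > 0`, `B ≤ B 0 < 0` the product `A B` is negative, so there
`A' ≥ -c A B > 0` and `B' ≤ c A B < 0`: at each of its points the solution moves strictly
deeper into the region, and by continuous induction on `[0, t]` it never leaves it. -/

open scoped ENNReal
open Set Filter Topology

lemma eventually_nhdsGT_lt_of_deriv_pos {f : ℝ → ℝ} {x : ℝ} (hf : 0 < deriv f x) :
    ∀ᶠ z in 𝓝[>] x, f x < f z := by
  have hslope : Tendsto (slope f x) (𝓝[>] x) (𝓝 (deriv f x)) :=
    (hasDerivAt_iff_tendsto_slope.mp (differentiableAt_of_deriv_ne_zero hf.ne').hasDerivAt)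
      |>.mono_left (nhdsGT_le_nhdsNE x)
  filter_upwards [hslope.eventually (eventually_gt_nhds hf), self_mem_nhdsWithin] with z hz hxz
  exact (slope_pos_iff_of_le (le_of_lt hxz)).mp hz

lemma eventually_nhdsGT_gt_of_deriv_neg {f : ℝ → ℝ} {x : ℝ} (hf : deriv f x < 0) :
    ∀ᶠ z in 𝓝[>] x, f z < f x := by
  have hneg : 0 < deriv (-f) x := by rwa [deriv.neg, neg_pos]
  simpa using eventually_nhdsGT_lt_of_deriv_pos hneg

theorem Icc_subset_of_deriv_pos_of_deriv_neg {f g : ℝ → ℝ} {a b : ℝ}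
    (hf : ContinuousOn f (Icc a b)) (hg : ContinuousOn g (Icc a b))
    (hderiv : ∀ x ∈ Ico a b, f a ≤ f x → g x ≤ g a → 0 < deriv f x ∧ deriv g x < 0) :
    Icc a b ⊆ {x | f a ≤ f x ∧ g x ≤ g a} := by
  refine IsClosed.Icc_subset_of_forall_mem_nhdsWithin ?_ ⟨le_rfl, le_rfl⟩ ?_
  · have hclosed := (isClosed_Icc.isClosed_le (continuousOn_const (c := f a)) hf).inter
      (isClosed_Icc.isClosed_le hg (continuousOn_const (c := g a)))
    convert hclosed using 1
    ext x
    simp only [mem_inter_iff, mem_ofPred_eq]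
    tauto
  · rintro x ⟨⟨hfx, hgx⟩, hx⟩
    obtain ⟨hf', hg'⟩ := hderiv x hx hfx hgx
    filter_upwards [eventually_nhdsGT_lt_of_deriv_pos hf', eventually_nhdsGT_gt_of_deriv_neg hg']
      with z hfz hgz
    exact ⟨hfx.trans hfz.le, hgz.le.trans hgx⟩

theorem ode_sign_persistence_general (c : ℝ) (hc : 0 < c) (T : ℝ≥0∞)
    (A B : ℝ → ℝ)
    (hA : ∀ t : ℝ, 0 ≤ t → ENNReal.ofReal t < T → DifferentiableAt ℝ A t)
    (hB : ∀ t : ℝ, 0 ≤ t → ENNReal.ofReal t < T → DifferentiableAt ℝ B t)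
    (hA0 : 0 < A 0) (hB0 : B 0 < 0)
    (hA' : ∀ t : ℝ, 0 ≤ t → ENNReal.ofReal t < T → -c * A t * B t ≤ deriv A t)
    (hB' : ∀ t : ℝ, 0 ≤ t → ENNReal.ofReal t < T → deriv B t ≤ c * A t * B t) :
    ∀ t : ℝ, 0 ≤ t → ENNReal.ofReal t < T → A 0 ≤ A t ∧ B t ≤ B 0 := by
  intro t ht htT
  have hdom : ∀ x ∈ Icc 0 t, ENNReal.ofReal x < T := fun x hx ↦
    (ENNReal.ofReal_le_ofReal hx.2).trans_lt htT
  refine Icc_subset_of_deriv_pos_of_deriv_neg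
    (fun x hx ↦ (hA x hx.1 (hdom x hx)).continuousAt.continuousWithinAt)
    (fun x hx ↦ (hB x hx.1 (hdom x hx)).continuousAt.continuousWithinAt)
    (fun x hx hAx hBx ↦ ?_) ⟨ht, le_rfl⟩
  have hx := Ico_subset_Icc_self hx
  have hAB : c * A x * B x < 0 :=
    mul_neg_of_pos_of_neg (mul_pos hc (hA0.trans_le hAx)) (hBx.trans_lt hB0)
  exact ⟨by linarith [hA' x hx.1 (hdom x hx)], by linarith [hB' x hx.1 (hdom x hx)]⟩

/-- **ODE sign-persistence lemma of the blow-up proof.** If `A(0) > 0 > B(0)`,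
`A' ≥ -c A B` and `B' ≤ c A B` on `[0,T)` with `c > 0`, then `A(t) ≥ A(0) > 0` and
`B(t) ≤ B(0) < 0` on `[0,T)`.  Here `T ∈ (0,∞]` is encoded as `T : ℝ≥0∞` with `0 < T`,
and membership of a time `t` in `[0,T)` as `0 ≤ t ∧ ENNReal.ofReal t < T`. -/
theorem ode_sign_persistence (c : ℝ) (hc : 0 < c) (T : ℝ≥0∞) (hT : 0 < T)
    (A B : ℝ → ℝ)
    (hA : ∀ t : ℝ, 0 ≤ t → ENNReal.ofReal t < T → DifferentiableAt ℝ A t)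
    (hB : ∀ t : ℝ, 0 ≤ t → ENNReal.ofReal t < T → DifferentiableAt ℝ B t)
    (hA0 : 0 < A 0) (hB0 : B 0 < 0)
    (hA' : ∀ t : ℝ, 0 ≤ t → ENNReal.ofReal t < T → -c * A t * B t ≤ deriv A t)
    (hB' : ∀ t : ℝ, 0 ≤ t → ENNReal.ofReal t < T → deriv B t ≤ c * A t * B t) :
    ∀ t : ℝ, 0 ≤ t → ENNReal.ofReal t < T → A 0 ≤ A t ∧ B t ≤ B 0 :=
  ode_sign_persistence_general c hc T A B hA hB hA0 hB0 hA' hB'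
end

section
/- Let d > 0 be a real number and let n : ℝ → ℝ be continuous, integrable, and nonnegative. Set v := p_d ∗ n, and assume that v and v' are square-integrable on ℝ. Then for every x ∈ ℝ: v'(x)² ≤ (1/(2·d^{3/2}))·( ∫_ℝ v(ξ)² dξ + d·∫_ℝ v'(ξ)² dξ ). -/
open MeasureTheory Set Filter Topology Real

section OneSidedIntegral

variable {g : ℝ → ℝ}

theorem hasDerivAt_setIntegral_Iic (hg : Continuous g) (hint : ∀ b, IntegrableOn g (Iic b))
    (x : ℝ) : HasDerivAt (fun y => ∫ ξ in Iic y, g ξ) (g x) x := by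
  have h : (fun y => ∫ ξ in Iic y, g ξ) = fun y => (∫ ξ in Iic x, g ξ) + ∫ ξ in x..y, g ξ := by
    funext y
    rw [← intervalIntegral.integral_Iic_sub_Iic (hint x) (hint y), add_sub_cancel]
  rw [h]
  exact (hg.integral_hasStrictDerivAt x x).hasDerivAt.const_add _

theorem hasDerivAt_setIntegral_Ioi (hg : Continuous g) (hint : ∀ b, IntegrableOn g (Ioi b))
    (x : ℝ) : HasDerivAt (fun y => ∫ ξ in Ioi y, g ξ) (-g x) x := by
  have h : (fun y => ∫ ξ in Ioi y, g ξ) = fun y => (∫ ξ in Ioi x, g ξ) - ∫ ξ in x..y, g ξ := by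
    funext y
    rw [← intervalIntegral.integral_Ioi_sub_Ioi' (hint x) (hint y), sub_sub_cancel]
  rw [h]
  exact (hg.integral_hasStrictDerivAt x x).hasDerivAt.const_sub _

end OneSidedIntegral

theorem two_mul_abs_le_integral_abs_of_hasDerivAt {g g' : ℝ → ℝ}
    (hg : ∀ x, HasDerivAt g (g' x) x) (hg' : Integrable g')
    (hbot : Tendsto g atBot (𝓝 0)) (htop : Tendsto g atTop (𝓝 0)) (x : ℝ) :
    2 * |g x| ≤ ∫ ξ, |g' ξ| := by
  have hleft : ∫ ξ in Iic x, g' ξ = g x := by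
    simpa using integral_Iic_of_hasDerivAt_of_tendsto' (fun y _ => hg y) hg'.integrableOn hbot
  have hright : ∫ ξ in Ioi x, g' ξ = -g x := by
    simpa using integral_Ioi_of_hasDerivAt_of_tendsto' (fun y _ => hg y) hg'.integrableOn htop
  calc 2 * |g x| = |∫ ξ in Iic x, g' ξ| + |∫ ξ in Ioi x, g' ξ| := by
        rw [hleft, hright, abs_neg, two_mul]
    _ ≤ (∫ ξ in Iic x, |g' ξ|) + ∫ ξ in Ioi x, |g' ξ| :=
        add_le_add abs_integral_le_integral_abs abs_integral_le_integral_abs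
    _ = ∫ ξ, |g' ξ| :=
        intervalIntegral.integral_Iic_add_Ioi hg'.abs.integrableOn hg'.abs.integrableOn

theorem sq_le_integral_sq_add_mul_integral_deriv_sq {f : ℝ → ℝ} (hf : Differentiable ℝ f)
    (hf2 : Integrable fun x => f x ^ 2) (hf2' : Integrable fun x => deriv f x ^ 2)
    {d : ℝ} (hd : 0 < d) (x : ℝ) :
    f x ^ 2 ≤ 1 / (2 * √d) * ((∫ ξ, f ξ ^ 2) + d * ∫ ξ, deriv f ξ ^ 2) := by
  set s := √d
  have hs : 0 < s := sqrt_pos.2 hd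
  have hs2 : s ^ 2 = d := sq_sqrt hd.le
  have hamgm : ∀ ξ, |2 * f ξ * deriv f ξ| ≤ f ξ ^ 2 / s + s * deriv f ξ ^ 2 := fun ξ => by
    have hsq : 0 ≤ (|f ξ| - s * |deriv f ξ|) ^ 2 / s := by positivity
    have hexpand : (|f ξ| - s * |deriv f ξ|) ^ 2 / s
        = f ξ ^ 2 / s + s * deriv f ξ ^ 2 - |2 * f ξ * deriv f ξ| := by
      rw [abs_mul, abs_mul, abs_two]
      field_simp
      rw [sub_sq, mul_pow, sq_abs, sq_abs]
      ring
    linarith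
  have hmajorant : Integrable fun ξ => f ξ ^ 2 / s + s * deriv f ξ ^ 2 :=
    (hf2.div_const s).add (hf2'.const_mul s)
  have hderiv : ∀ ξ, HasDerivAt (fun y => f y ^ 2) (2 * f ξ * deriv f ξ) ξ := fun ξ => by
    simpa using (hf ξ).hasDerivAt.fun_pow 2
  have hint : Integrable fun ξ => 2 * f ξ * deriv f ξ :=
    hmajorant.mono' ((continuous_const.mul hf.continuous).aestronglyMeasurable.mul
      (measurable_deriv f).aestronglyMeasurable) (ae_of_all _ fun ξ => hamgm ξ)
  have hpeak := two_mul_abs_le_integral_abs_of_hasDerivAt hderiv hint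
    (tendsto_zero_of_hasDerivAt_of_integrableOn_Iic (a := 0) (fun y _ => hderiv y)
      hint.integrableOn hf2.integrableOn)
    (tendsto_zero_of_hasDerivAt_of_integrableOn_Ioi (a := 0) (fun y _ => hderiv y)
      hint.integrableOn hf2.integrableOn) x
  have htotal : ∫ ξ, f ξ ^ 2 / s + s * deriv f ξ ^ 2
      = 1 / s * ((∫ ξ, f ξ ^ 2) + d * ∫ ξ, deriv f ξ ^ 2) := by
    rw [integral_add (hf2.div_const s) (hf2'.const_mul s), integral_div, integral_const_mul,
      ← hs2]
    field_simp
  calc f x ^ 2 = 1 / 2 * (2 * |f x ^ 2|) := by rw [abs_of_nonneg (sq_nonneg _)]; ring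
    _ ≤ 1 / 2 * ∫ ξ, f ξ ^ 2 / s + s * deriv f ξ ^ 2 := by
        gcongr
        exact hpeak.trans (integral_mono hint.abs hmajorant hamgm)
    _ = _ := by rw [htotal]; field_simp

section ExpConv

variable {s : ℝ} {n : ℝ → ℝ}

noncomputable def leftExpConv (s : ℝ) (n : ℝ → ℝ) (y : ℝ) : ℝ :=
  ∫ ξ in Iic y, exp (-(y - ξ) / s) * n ξ

noncomputable def rightExpConv (s : ℝ) (n : ℝ → ℝ) (y : ℝ) : ℝ :=
  ∫ ξ in Ioi y, exp ((y - ξ) / s) * n ξ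

theorem leftExpConv_eq (s : ℝ) (n : ℝ → ℝ) (y : ℝ) :
    leftExpConv s n y = exp (-y / s) * ∫ ξ in Iic y, exp (ξ / s) * n ξ := by
  rw [leftExpConv, ← integral_const_mul]
  congr 1 with ξ
  rw [← mul_assoc, ← exp_add]
  ring_nf

theorem rightExpConv_eq (s : ℝ) (n : ℝ → ℝ) (y : ℝ) :
    rightExpConv s n y = exp (y / s) * ∫ ξ in Ioi y, exp (-ξ / s) * n ξ := by
  rw [rightExpConv, ← integral_const_mul]
  congr 1 with ξ
  rw [← mul_assoc, ← exp_add]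
  ring_nf

theorem leftExpConv_nonneg (hn : ∀ ξ, 0 ≤ n ξ) (y : ℝ) : 0 ≤ leftExpConv s n y :=
  integral_nonneg fun ξ => mul_nonneg (exp_pos _).le (hn ξ)

theorem rightExpConv_nonneg (hn : ∀ ξ, 0 ≤ n ξ) (y : ℝ) : 0 ≤ rightExpConv s n y :=
  integral_nonneg fun ξ => mul_nonneg (exp_pos _).le (hn ξ)

theorem integrableOn_exp_div_mul_Iic (hs : 0 ≤ s) (hn : Integrable n) (b : ℝ) :
    IntegrableOn (fun ξ => exp (ξ / s) * n ξ) (Iic b) := by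
  refine hn.integrableOn.bdd_mul (c := exp (b / s)) (by fun_prop) ?_
  filter_upwards [ae_restrict_mem measurableSet_Iic] with ξ hξ
  rw [norm_of_nonneg (exp_pos _).le]
  exact exp_le_exp.2 (div_le_div_of_nonneg_right hξ hs)

theorem integrableOn_exp_neg_div_mul_Ioi (hs : 0 ≤ s) (hn : Integrable n) (b : ℝ) :
    IntegrableOn (fun ξ => exp (-ξ / s) * n ξ) (Ioi b) := by
  refine hn.integrableOn.bdd_mul (c := exp (-b / s)) (by fun_prop) ?_
  filter_upwards [ae_restrict_mem measurableSet_Ioi] with ξ hξ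
  rw [norm_of_nonneg (exp_pos _).le]
  exact exp_le_exp.2 (div_le_div_of_nonneg_right (neg_le_neg (le_of_lt hξ)) hs)

theorem hasDerivAt_leftExpConv (hs : 0 ≤ s) (hc : Continuous n) (hn : Integrable n) (y : ℝ) :
    HasDerivAt (leftExpConv s n) (n y - leftExpConv s n y / s) y := by
  have hweight : HasDerivAt (fun y => exp (-y / s)) (exp (-y / s) * (-1 / s)) y :=
    ((hasDerivAt_neg y).div_const s).exp
  have hmass := hasDerivAt_setIntegral_Iic (by fun_prop) (integrableOn_exp_div_mul_Iic hs hn) y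
  rw [funext (leftExpConv_eq s n)]
  refine (hweight.mul hmass).congr_deriv ?_
  beta_reduce
  rw [← mul_assoc (exp (-y / s)), ← exp_add, neg_div, neg_add_cancel, exp_zero]
  ring

theorem hasDerivAt_rightExpConv (hs : 0 ≤ s) (hc : Continuous n) (hn : Integrable n) (y : ℝ) :
    HasDerivAt (rightExpConv s n) (rightExpConv s n y / s - n y) y := by
  have hweight : HasDerivAt (fun y => exp (y / s)) (exp (y / s) * (1 / s)) y :=
    ((hasDerivAt_id y).div_const s).exp
  have hmass :=
    hasDerivAt_setIntegral_Ioi (by fun_prop) (integrableOn_exp_neg_div_mul_Ioi hs hn) y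
  rw [funext (rightExpConv_eq s n)]
  refine (hweight.mul hmass).congr_deriv ?_
  beta_reduce
  rw [mul_neg, ← mul_assoc (exp (y / s)), ← exp_add, neg_div, add_neg_cancel, exp_zero]
  ring

end ExpConv

section KernelConvolution

variable {d : ℝ} {n : ℝ → ℝ}

theorem integral_pd_mul_eq (hn : Integrable n) (y : ℝ) :
    ∫ ξ, pd d (y - ξ) * n ξ = 1 / (2 * √d) * (leftExpConv √d n y + rightExpConv √d n y) := by
  have hbound : ∀ x, ‖pd d x‖ ≤ 1 / (2 * √d) := fun x => by
    rw [pd, norm_mul, norm_of_nonneg (by positivity), norm_of_nonneg (exp_pos _).le]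
    refine mul_le_of_le_one_right (by positivity) (exp_le_one_iff.2 ?_)
    exact div_nonpos_of_nonpos_of_nonneg (neg_nonpos.2 (abs_nonneg x)) (sqrt_nonneg d)
  have hint : Integrable fun ξ => pd d (y - ξ) * n ξ :=
    hn.bdd_mul (by unfold pd; fun_prop) (ae_of_all _ fun ξ => hbound (y - ξ))
  rw [← intervalIntegral.integral_Iic_add_Ioi hint.integrableOn hint.integrableOn, leftExpConv,
    rightExpConv, mul_add, ← integral_const_mul, ← integral_const_mul]
  congr 1
  · refine setIntegral_congr_fun measurableSet_Iic fun ξ hξ => ?_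
    rw [pd, abs_of_nonneg (sub_nonneg.2 hξ)]
    ring
  · refine setIntegral_congr_fun measurableSet_Ioi fun ξ hξ => ?_
    rw [pd, abs_of_neg (sub_neg.2 hξ), neg_neg]
    ring

theorem hasDerivAt_integral_pd_mul (hc : Continuous n) (hn : Integrable n) (y : ℝ) :
    HasDerivAt (fun x => ∫ ξ, pd d (x - ξ) * n ξ)
      (1 / (2 * √d) * ((rightExpConv √d n y - leftExpConv √d n y) / √d)) y := by
  simp_rw [integral_pd_mul_eq hn]
  refine (((hasDerivAt_leftExpConv (sqrt_nonneg d) hc hn y).add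
    (hasDerivAt_rightExpConv (sqrt_nonneg d) hc hn y)).const_mul (1 / (2 * √d))).congr_deriv ?_
  ring

theorem abs_deriv_integral_pd_mul_le (hc : Continuous n) (hn : Integrable n)
    (hpos : ∀ ξ, 0 ≤ n ξ) (y : ℝ) :
    |deriv (fun x => ∫ ξ, pd d (x - ξ) * n ξ) y| ≤ (∫ ξ, pd d (y - ξ) * n ξ) / √d := by
  have hL := leftExpConv_nonneg (s := √d) hpos y
  have hR := rightExpConv_nonneg (s := √d) hpos y
  rw [(hasDerivAt_integral_pd_mul hc hn y).deriv, integral_pd_mul_eq hn, abs_mul,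
    abs_of_nonneg (by positivity : (0 : ℝ) ≤ 1 / (2 * √d)), abs_div,
    abs_of_nonneg (sqrt_nonneg d)]
  calc 1 / (2 * √d) * (|rightExpConv √d n y - leftExpConv √d n y| / √d)
      ≤ 1 / (2 * √d) * ((leftExpConv √d n y + rightExpConv √d n y) / √d) := by
        gcongr
        exact abs_sub_le_iff.2 ⟨by linarith, by linarith⟩
    _ = _ := by ring

end KernelConvolution

/-- **Uniform a priori bound on `∂ₓv` in the first global existence case.** If `n ≥ 0`
is continuous and integrable, `v := p_d ∗ n`, and `v`, `v'` are square-integrable, then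
`v'(x)² ≤ (1/(2 d^{3/2})) (∫ v² + d ∫ v'²)` for every `x`. -/
theorem deriv_uniform_bound (d : ℝ) (hd : 0 < d) (n : ℝ → ℝ)
    (hc : Continuous n) (hi : MeasureTheory.Integrable n) (hpos : ∀ ξ, 0 ≤ n ξ)
    (v : ℝ → ℝ) (hv : v = fun x => ∫ ξ : ℝ, pd d (x - ξ) * n ξ)
    (h2 : MeasureTheory.Integrable (fun ξ => (v ξ) ^ 2))
    (h2' : MeasureTheory.Integrable (fun ξ => (deriv v ξ) ^ 2)) (x : ℝ) :
    (deriv v x) ^ 2 ≤ 1 / (2 * d ^ ((3 : ℝ) / 2))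
      * ((∫ ξ : ℝ, (v ξ) ^ 2) + d * ∫ ξ : ℝ, (deriv v ξ) ^ 2) := by
  have hdiff : Differentiable ℝ v := by
    rw [hv]
    exact fun y => (hasDerivAt_integral_pd_mul hc hi y).differentiableAt
  have hslope : |deriv v x| ≤ v x / √d := by
    rw [hv]
    exact abs_deriv_integral_pd_mul_le hc hi hpos x
  have hpointwise : deriv v x ^ 2 ≤ v x ^ 2 / d := by
    calc deriv v x ^ 2 = |deriv v x| ^ 2 := (sq_abs _).symm
      _ ≤ (v x / √d) ^ 2 := pow_le_pow_left₀ (abs_nonneg _) hslope 2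
      _ = v x ^ 2 / d := by rw [div_pow, sq_sqrt hd.le]
  have hpow : d ^ ((3 : ℝ) / 2) = d * √d := by
    rw [show (3 : ℝ) / 2 = 1 + 1 / 2 by norm_num, rpow_add hd, rpow_one, sqrt_eq_rpow]
  calc deriv v x ^ 2 ≤ v x ^ 2 / d := hpointwise
    _ ≤ 1 / (2 * √d) * ((∫ ξ, v ξ ^ 2) + d * ∫ ξ, deriv v ξ ^ 2) / d := by
        gcongr
        exact sq_le_integral_sq_add_mul_integral_deriv_sq hdiff h2 h2' hd x
    _ = _ := by
        rw [hpow]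
        field_simp
end
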